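/- arXiv:2307.04566 — 11 statements merged into one kernel-verified Lean document; each statement's English description precedes it below -/
import Mathlib

section
/- Let d(X) = X⁴ + 2X³ − 7X² − 4X + 10 = (X² − 2)(X² + 2X − 5) ∈ ℤ[X], f(X) = 2X⁸ + 24X⁷ + 100X⁶ + 120X⁵ − 266X⁴ − 792X³ − 244X² + 912X + 721 and g(X) = 2X⁶ + 22X⁵ + 86X⁴ + 118X³ − 74X² − 334X − 228. Then f(X)² − d(X)·g(X)² = 1; in particular (X² − 2)(X² + 2X − 5) is Pellian over ℤ[X]. -/
open Polynomial

theorem explicit_pell_solution_order_four :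
    (2 * X ^ 8 + 24 * X ^ 7 + 100 * X ^ 6 + 120 * X ^ 5 - 266 * X ^ 4 - 792 * X ^ 3
        - 244 * X ^ 2 + 912 * X + 721 : Polynomial ℤ) ^ 2
      - ((X ^ 2 - 2) * (X ^ 2 + 2 * X - 5)) *
        (2 * X ^ 6 + 22 * X ^ 5 + 86 * X ^ 4 + 118 * X ^ 3 - 74 * X ^ 2 - 334 * X - 228) ^ 2
      = 1 ∧
    (X ^ 4 + 2 * X ^ 3 - 7 * X ^ 2 - 4 * X + 10 : Polynomial ℤ)
      = (X ^ 2 - 2) * (X ^ 2 + 2 * X - 5) ∧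
    ∃ f g : Polynomial ℤ, g ≠ 0 ∧
      f ^ 2 - ((X ^ 2 - 2) * (X ^ 2 + 2 * X - 5)) * g ^ 2 = 1 := by
  have pell_identity : (2 * X ^ 8 + 24 * X ^ 7 + 100 * X ^ 6 + 120 * X ^ 5 - 266 * X ^ 4
        - 792 * X ^ 3 - 244 * X ^ 2 + 912 * X + 721 : Polynomial ℤ) ^ 2
      - ((X ^ 2 - 2) * (X ^ 2 + 2 * X - 5)) *
        (2 * X ^ 6 + 22 * X ^ 5 + 86 * X ^ 4 + 118 * X ^ 3 - 74 * X ^ 2 - 334 * X - 228) ^ 2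
      = 1 := by
    ring
  refine ⟨pell_identity, by ring, _, _, fun hg => ?_, pell_identity⟩
  -- `g` has constant term `-228`
  simpa using congrArg (eval 0) hg
end

section
/- Let K be a field of characteristic different from 2 and let d ∈ K[X] be nonconstant and not a square in K[X]. Suppose f₁, g₁ ∈ K[X] satisfy f₁² − d·g₁² = 1 with g₁ ≠ 0, and that f₁ has minimal degree among all such nontrivial solutions (i.e., for all f, g ∈ K[X] with g ≠ 0 and f² − d·g² = 1, deg f₁ ≤ deg f). Define sequences fₙ, gₙ ∈ K[X] by f₀ = 1, g₀ = 0, f_{n+1} = f₁·fₙ + d·g₁·gₙ, g_{n+1} = f₁·gₙ + g₁·fₙ (so that fₙ + gₙ√d = (f₁ + g₁√d)ⁿ). Then for every pair f, g ∈ K[X] with f² − d·g² = 1 there exists n ∈ ℕ such that f = fₙ or f = −fₙ, and g = gₙ or g = −gₙ. -/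
/-!
Solutions of `f² - d g² = 1` are the norm-one (unitary) elements `z = f + g√d` of
`K[X][√d] = QuadraticAlgebra K[X] d 0`. As `deg d > 0`, a solution with `g ≠ 0` has
`2 deg f = deg d + 2 deg g`, and comparing leading coefficients shows that for `v = u` or
`v = u⁻¹` (where `u = f₁ + g₁√d`) the leading terms of `g f₁ ± f g₁` cancel in the `√d`-part
`g v.re - f v.im` of `z v⁻¹`. Since `(g f₁ - f g₁)(g f₁ + f g₁) = g² - g₁²` and minimality of `u`
gives `deg g₁ ≤ deg g`, this part has degree `< deg g`. Descending, one reaches `g = 0`, i.e.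
`z = ±1`, so every solution is `±uᵏ` with `k ∈ ℤ`; finally `uⁿ = fₙ + gₙ√d` and
`u⁻ⁿ = fₙ - gₙ√d`.
-/

open Polynomial QuadraticAlgebra

namespace QuadraticAlgebra

variable {R : Type*} [CommRing R] {a : R}

local notation "𝔸" => QuadraticAlgebra R a 0

theorem norm_eq_sq_sub_mul_sq (z : 𝔸) : norm z = z.re ^ 2 - a * z.im ^ 2 := by
  rw [norm_def]; ring

theorem mem_unitary_iff_sq_sub_mul_sq {z : 𝔸} :
    z ∈ unitary 𝔸 ↔ z.re ^ 2 - a * z.im ^ 2 = 1 := by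
  rw [← norm_eq_one_iff_mem_unitary, norm_eq_sq_sub_mul_sq]

theorem im_mul_star (z w : 𝔸) : (z * star w).im = z.im * w.re - z.re * w.im := by
  simp only [im_mul, re_star, im_star]; ring

theorem coe_unitary_inv (u : unitary 𝔸) :
    ((u⁻¹ : unitary 𝔸) : 𝔸) = ⟨(u : 𝔸).re, -(u : 𝔸).im⟩ := by
  rw [← Unitary.star_eq_inv, Unitary.coe_star, ← mk_eta (u : 𝔸), star_mk, zero_mul, add_zero]

theorem im_coe_mul_inv (z v : unitary 𝔸) :
    ((z * v⁻¹ : unitary 𝔸) : 𝔸).im = (z : 𝔸).im * (v : 𝔸).re - (z : 𝔸).re * (v : 𝔸).im := by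
  rw [← Unitary.star_eq_inv, Submonoid.coe_mul, Unitary.coe_star, im_mul_star]

theorem eq_one_or_eq_neg_one_of_im_eq_zero [NoZeroDivisors R] (z : unitary 𝔸)
    (h : (z : 𝔸).im = 0) : z = 1 ∨ z = -1 := by
  have hre : (z : 𝔸).re * (z : 𝔸).re = 1 := by
    linear_combination mem_unitary_iff_sq_sub_mul_sq.mp z.2 + a * (z : 𝔸).im * h
  rcases mul_self_eq_one_iff.mp hre with h1 | h1
  · exact Or.inl (Subtype.ext (QuadraticAlgebra.ext h1 h))
  · exact Or.inr (Subtype.ext (QuadraticAlgebra.ext h1 (by simp [Unitary.coe_neg, h])))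

theorem coe_pow_eq_mk_of_recurrence (u : unitary 𝔸) (F G : ℕ → R)
    (hF0 : F 0 = 1) (hG0 : G 0 = 0)
    (hF : ∀ n, F (n + 1) = (u : 𝔸).re * F n + a * (u : 𝔸).im * G n)
    (hG : ∀ n, G (n + 1) = (u : 𝔸).re * G n + (u : 𝔸).im * F n)
    (n : ℕ) : ((u ^ n : unitary 𝔸) : 𝔸) = ⟨F n, G n⟩ := by
  induction n with
  | zero => rw [hF0, hG0]; rfl
  | succ n ih =>
    rw [pow_succ, Submonoid.coe_mul, ih, hF, hG]
    ext <;> simp only [re_mul, im_mul, zero_mul, add_zero] <;> ring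

theorem exists_coe_zpow_eq_mk_of_recurrence (u : unitary 𝔸) (F G : ℕ → R)
    (hF0 : F 0 = 1) (hG0 : G 0 = 0)
    (hF : ∀ n, F (n + 1) = (u : 𝔸).re * F n + a * (u : 𝔸).im * G n)
    (hG : ∀ n, G (n + 1) = (u : 𝔸).re * G n + (u : 𝔸).im * F n)
    (k : ℤ) :
    ∃ n : ℕ, ((u ^ k : unitary 𝔸) : 𝔸) = ⟨F n, G n⟩ ∨ ((u ^ k : unitary 𝔸) : 𝔸) = ⟨F n, -G n⟩ := by
  have hpow := coe_pow_eq_mk_of_recurrence u F G hF0 hG0 hF hG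
  obtain ⟨n, rfl | rfl⟩ := Int.eq_nat_or_neg k
  · exact ⟨n, Or.inl (by rw [zpow_natCast, hpow])⟩
  · refine ⟨n, Or.inr ?_⟩
    rw [zpow_neg, zpow_natCast, coe_unitary_inv, hpow]

end QuadraticAlgebra

namespace Polynomial

variable {K : Type*} [Field K] {d f g f₁ g₁ : K[X]}

theorem degree_one_lt_degree_mul_sq (hd : 0 < d.natDegree) (hg : g ≠ 0) :
    (1 : K[X]).degree < (d * g ^ 2).degree := by
  have hd0 : d ≠ 0 := ne_zero_of_natDegree_gt hd
  rw [degree_one, ← natDegree_pos_iff_degree_pos, natDegree_mul hd0 (pow_ne_zero 2 hg)]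
  omega

theorem two_mul_natDegree_of_pell (hd : 0 < d.natDegree) (hg : g ≠ 0)
    (h : f ^ 2 - d * g ^ 2 = 1) : 2 * f.natDegree = d.natDegree + 2 * g.natDegree := by
  have hf : f ^ 2 = d * g ^ 2 + 1 := by linear_combination h
  have := congrArg natDegree hf
  rwa [natDegree_add_eq_left_of_degree_lt (degree_one_lt_degree_mul_sq hd hg), natDegree_pow,
    natDegree_mul (ne_zero_of_natDegree_gt hd) (pow_ne_zero 2 hg), natDegree_pow] at this

theorem leadingCoeff_sq_of_pell (hd : 0 < d.natDegree) (hg : g ≠ 0)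
    (h : f ^ 2 - d * g ^ 2 = 1) : f.leadingCoeff ^ 2 = d.leadingCoeff * g.leadingCoeff ^ 2 := by
  have hf : f ^ 2 = d * g ^ 2 + 1 := by linear_combination h
  have := congrArg leadingCoeff hf
  rwa [leadingCoeff_add_of_degree_lt' (degree_one_lt_degree_mul_sq hd hg), leadingCoeff_pow,
    leadingCoeff_mul, leadingCoeff_pow] at this

theorem leadingCoeff_mul_eq_or_eq_neg_of_pell (hd : 0 < d.natDegree)
    (hg₁ : g₁ ≠ 0) (h₁ : f₁ ^ 2 - d * g₁ ^ 2 = 1) (hg : g ≠ 0) (h : f ^ 2 - d * g ^ 2 = 1) :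
    g.leadingCoeff * f₁.leadingCoeff = f.leadingCoeff * g₁.leadingCoeff ∨
      g.leadingCoeff * f₁.leadingCoeff = -(f.leadingCoeff * g₁.leadingCoeff) := by
  refine sq_eq_sq_iff_eq_or_eq_neg.mp ?_
  rw [mul_pow, mul_pow, leadingCoeff_sq_of_pell hd hg₁ h₁, leadingCoeff_sq_of_pell hd hg h]
  ring

theorem degree_mul_sub_mul_lt_of_pell (h2 : (2 : K) ≠ 0) (hd : 0 < d.natDegree)
    (hg₁ : g₁ ≠ 0) (h₁ : f₁ ^ 2 - d * g₁ ^ 2 = 1) (hg : g ≠ 0) (h : f ^ 2 - d * g ^ 2 = 1)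
    (hle : f₁.degree ≤ f.degree)
    (hlc : g.leadingCoeff * f₁.leadingCoeff = f.leadingCoeff * g₁.leadingCoeff) :
    (g * f₁ - f * g₁).degree < g.degree := by
  have hdeg₁ := two_mul_natDegree_of_pell hd hg₁ h₁
  have hdeg := two_mul_natDegree_of_pell hd hg h
  have hle' := natDegree_le_natDegree hle
  have hf₁ : f₁ ≠ 0 := by rintro rfl; rw [natDegree_zero] at hdeg₁; omega
  by_cases hz : g * f₁ - f * g₁ = 0
  · rw [hz, degree_zero]; exact bot_lt_iff_ne_bot.mpr (degree_ne_bot.mpr hg)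
  refine degree_lt_degree ?_
  have hf₁_pos : 0 < f₁.natDegree := by omega
  have hlc_sum : (g * f₁).leadingCoeff + (f * g₁).leadingCoeff ≠ 0 := by
    rw [leadingCoeff_mul, leadingCoeff_mul, ← hlc, ← two_mul]
    exact mul_ne_zero h2 (mul_ne_zero (leadingCoeff_ne_zero.mpr hg)
      (leadingCoeff_ne_zero.mpr hf₁))
  have hsum : g.natDegree + f₁.natDegree ≤ (g * f₁ + f * g₁).natDegree := by
    rw [← natDegree_mul hg hf₁]
    refine natDegree_le_natDegree ?_
    rw [degree_add_eq_of_leadingCoeff_add_ne_zero hlc_sum]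
    exact le_max_left _ _
  have hsum0 : g * f₁ + f * g₁ ≠ 0 := by
    rintro hzero; rw [hzero, natDegree_zero] at hsum; omega
  have hprod : (g * f₁ - f * g₁) * (g * f₁ + f * g₁) = g ^ 2 - g₁ ^ 2 := by
    linear_combination g ^ 2 * h₁ - g₁ ^ 2 * h
  have hprod_le : (g ^ 2 - g₁ ^ 2).natDegree ≤ 2 * g.natDegree := by
    refine (natDegree_sub_le _ _).trans ?_
    simp only [natDegree_pow]
    omega
  have := congrArg natDegree hprod
  rw [natDegree_mul hz hsum0] at this
  omega

end Polynomial

section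

variable {K : Type*} [Field K] {d : K[X]}

local notation "𝔸" => QuadraticAlgebra K[X] d 0

theorem exists_eq_zpow_or_eq_neg_zpow_of_minimal (h2 : (2 : K) ≠ 0) (hd : 0 < d.natDegree)
    (u : unitary 𝔸) (hu : (u : 𝔸).im ≠ 0)
    (hmin : ∀ z : unitary 𝔸, (z : 𝔸).im ≠ 0 → (u : 𝔸).re.degree ≤ (z : 𝔸).re.degree)
    (z : unitary 𝔸) : ∃ k : ℤ, z = u ^ k ∨ z = -u ^ k := by
  induction hz : (z : 𝔸).im using degree_lt_wf.induction generalizing z with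
  | _ g ih =>
  by_cases hg : g = 0
  · exact ⟨0, by simpa using eq_one_or_eq_neg_one_of_im_eq_zero z (hz.trans hg)⟩
  subst hz
  have hpell {w : unitary 𝔸} := mem_unitary_iff_sq_sub_mul_sq.mp w.2
  obtain ⟨v, hv, hlc⟩ : ∃ v : unitary 𝔸, (v = u ∨ v = u⁻¹) ∧
      (z : 𝔸).im.leadingCoeff * (v : 𝔸).re.leadingCoeff =
        (z : 𝔸).re.leadingCoeff * (v : 𝔸).im.leadingCoeff := by
    rcases leadingCoeff_mul_eq_or_eq_neg_of_pell hd hu hpell hg hpell with h | h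
    · exact ⟨u, Or.inl rfl, h⟩
    · refine ⟨u⁻¹, Or.inr rfl, ?_⟩
      rw [coe_unitary_inv, leadingCoeff_neg, h, mul_neg]
  have hv_re : (v : 𝔸).re = (u : 𝔸).re := by rcases hv with rfl | rfl <;> simp [coe_unitary_inv]
  have hv_im : (v : 𝔸).im ≠ 0 := by rcases hv with rfl | rfl <;> simp [coe_unitary_inv, hu]
  have hdesc : ((z * v⁻¹ : unitary 𝔸) : 𝔸).im.degree < (z : 𝔸).im.degree := by
    rw [im_coe_mul_inv]
    exact degree_mul_sub_mul_lt_of_pell h2 hd hv_im hpell hg hpell (hv_re ▸ hmin z hg) hlc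
  obtain ⟨k, hk⟩ := ih _ hdesc (z * v⁻¹) rfl
  obtain ⟨j, rfl⟩ : ∃ j : ℤ, v = u ^ j :=
    hv.elim (fun h => ⟨1, by simp [h]⟩) (fun h => ⟨-1, by simp [h]⟩)
  refine ⟨k + j, ?_⟩
  rw [← inv_mul_cancel_right z (u ^ j), zpow_add]
  rcases hk with hk | hk <;> rw [hk]
  · exact Or.inl rfl
  · exact Or.inr (neg_mul _ _)

end

theorem pell_solutions_generated_by_fundamental_general
    {K : Type*} [Field K] (hchar : (2 : K) ≠ 0)
    (d : Polynomial K) (hd : 0 < d.natDegree)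
    (f₁ g₁ : Polynomial K) (hg₁ : g₁ ≠ 0) (hpell : f₁ ^ 2 - d * g₁ ^ 2 = 1)
    (hmin : ∀ f g : Polynomial K, g ≠ 0 → f ^ 2 - d * g ^ 2 = 1 → f₁.degree ≤ f.degree)
    (F G : ℕ → Polynomial K)
    (hF0 : F 0 = 1) (hG0 : G 0 = 0)
    (hF : ∀ n, F (n + 1) = f₁ * F n + d * g₁ * G n)
    (hG : ∀ n, G (n + 1) = f₁ * G n + g₁ * F n) :
    ∀ f g : Polynomial K, f ^ 2 - d * g ^ 2 = 1 →
      ∃ n : ℕ, (f = F n ∨ f = -F n) ∧ (g = G n ∨ g = -G n) := by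
  intro f g h
  let u : unitary (QuadraticAlgebra K[X] d 0) := ⟨⟨f₁, g₁⟩, mem_unitary_iff_sq_sub_mul_sq.mpr hpell⟩
  obtain ⟨k, hk⟩ := exists_eq_zpow_or_eq_neg_zpow_of_minimal hchar hd u hg₁
    (fun z hz => hmin _ _ hz (mem_unitary_iff_sq_sub_mul_sq.mp z.2))
    ⟨⟨f, g⟩, mem_unitary_iff_sq_sub_mul_sq.mpr h⟩
  obtain ⟨n, hn⟩ := exists_coe_zpow_eq_mk_of_recurrence u F G hF0 hG0 hF hG k
  refine ⟨n, ?_⟩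
  rcases hk with hk | hk <;> rcases hn with hn | hn <;>
    simp only [Subtype.ext_iff, Unitary.coe_neg, hn, neg_mk, mk.injEq] at hk <;> simp [hk]

theorem pell_solutions_generated_by_fundamental
    {K : Type*} [Field K] (hchar : (2 : K) ≠ 0)
    (d : Polynomial K) (hd : 0 < d.natDegree) (hsq : ¬ ∃ e : Polynomial K, d = e ^ 2)
    (f₁ g₁ : Polynomial K) (hg₁ : g₁ ≠ 0) (hpell : f₁ ^ 2 - d * g₁ ^ 2 = 1)
    (hmin : ∀ f g : Polynomial K, g ≠ 0 → f ^ 2 - d * g ^ 2 = 1 → f₁.degree ≤ f.degree)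
    (F G : ℕ → Polynomial K)
    (hF0 : F 0 = 1) (hG0 : G 0 = 0)
    (hF : ∀ n, F (n + 1) = f₁ * F n + d * g₁ * G n)
    (hG : ∀ n, G (n + 1) = f₁ * G n + g₁ * F n) :
    ∀ f g : Polynomial K, f ^ 2 - d * g ^ 2 = 1 →
      ∃ n : ℕ, (f = F n ∨ f = -F n) ∧ (g = G n ∨ g = -G n) :=
  pell_solutions_generated_by_fundamental_general hchar d hd f₁ g₁ hg₁ hpell hmin F G hF0 hG0 hF hG
end

section
/- Let d ∈ ℤ[X] be monic, quartic (degree 4) and squarefree. Suppose there exist f, g ∈ ℚ[X] with g ≠ 0 and f² − d·g² = 1 such that the leading coefficients of f and g are both integers. Then for every f', g' ∈ ℚ[X] with g' ≠ 0 and f'² − d·g'² = 1, the leading coefficients of f' and g' are integers. -/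
/-!
Normalise a solution by `g ↦ -g` so that `lc g = lc f`; then `f + g√D` has leading coefficient
`2 lc f`, and solutions multiply like units of `K[X][√D]`. Dividing a normalised solution by one
`(f₀, g₀)` of minimal degree gives a solution `(F, G)` of lower degree with `lc f = 2 lc f₀ lc F`,
and two normalised solutions of equal degree satisfy `f₁ = ±f₂`. By descent every solution has
`lc f = ±2ᵏ a₀ᵏ⁺¹` with `a₀ = lc f₀`. If one of these is an integer, `(2a₀)ᵏ⁺¹` is an even
integer, hence so is `2a₀`; thus `a₀ ∈ ℤ` and all of them are integers, as are the `lc g = ±lc f`.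
-/

open Polynomial

namespace Polynomial

variable {K : Type*} [Field K] [NeZero (2 : K)] {p q : K[X]}

theorem natDegree_add_of_leadingCoeff_eq (hp : p ≠ 0) (hdeg : p.natDegree = q.natDegree)
    (hlc : p.leadingCoeff = q.leadingCoeff) : (p + q).natDegree = p.natDegree := by
  have hcoeff : (p + q).coeff p.natDegree = 2 * p.leadingCoeff := by
    rw [coeff_add, hdeg, ← leadingCoeff, ← hdeg, ← leadingCoeff, ← hlc, two_mul]
  refine le_antisymm ((natDegree_add_le p q).trans (by rw [hdeg, max_self])) ?_
  exact le_natDegree_of_ne_zero (hcoeff ▸ mul_ne_zero two_ne_zero (leadingCoeff_ne_zero.2 hp))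

theorem leadingCoeff_add_of_leadingCoeff_eq (hp : p ≠ 0) (hdeg : p.natDegree = q.natDegree)
    (hlc : p.leadingCoeff = q.leadingCoeff) : (p + q).leadingCoeff = 2 * p.leadingCoeff := by
  rw [leadingCoeff, natDegree_add_of_leadingCoeff_eq hp hdeg hlc, coeff_add, hdeg,
    ← leadingCoeff, ← hdeg, ← leadingCoeff, ← hlc, two_mul]

end Polynomial

section Pell

variable {K : Type*} [Field K] {D : K[X]}

def IsPellSolution (D f g : K[X]) : Prop := g ≠ 0 ∧ f ^ 2 - D * g ^ 2 = 1

namespace IsPellSolution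

variable {f g f₁ g₁ f₂ g₂ : K[X]}

theorem natDegree_eq (hD0 : 0 < D.natDegree) (h : IsPellSolution D f g) :
    2 * f.natDegree = D.natDegree + 2 * g.natDegree := by
  have hf : f ^ 2 = D * g ^ 2 + C 1 := by rw [C_1]; linear_combination h.2
  have := congrArg natDegree hf
  rw [natDegree_add_C, natDegree_pow, natDegree_mul (ne_zero_of_natDegree_gt hD0)
    (pow_ne_zero 2 h.1), natDegree_pow] at this
  omega

theorem leadingCoeff_sq (hD : D.Monic) (hD0 : 0 < D.natDegree) (h : IsPellSolution D f g) :
    f.leadingCoeff ^ 2 = g.leadingCoeff ^ 2 := by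
  have hf : f ^ 2 = D * g ^ 2 + C 1 := by rw [C_1]; linear_combination h.2
  have hpos : 0 < (D * g ^ 2).degree := by
    rw [← natDegree_pos_iff_degree_pos, natDegree_mul hD.ne_zero (pow_ne_zero 2 h.1)]
    omega
  have := congrArg leadingCoeff hf
  rwa [leadingCoeff_add_of_degree_lt' (degree_C_le.trans_lt hpos), leadingCoeff_mul,
    hD.leadingCoeff, one_mul, leadingCoeff_pow, leadingCoeff_pow] at this

theorem exists_leadingCoeff_eq (hD : D.Monic) (hD0 : 0 < D.natDegree)
    (h : IsPellSolution D f g) :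
    ∃ g', IsPellSolution D f g' ∧ g'.leadingCoeff = f.leadingCoeff := by
  rcases sq_eq_sq_iff_eq_or_eq_neg.1 (h.leadingCoeff_sq hD hD0) with e | e
  · exact ⟨g, h, e.symm⟩
  · exact ⟨-g, ⟨neg_ne_zero.2 h.1, by rw [neg_sq]; exact h.2⟩, by rw [leadingCoeff_neg, e]⟩

theorem exists_forall_natDegree_le (h : IsPellSolution D f g) :
    ∃ f₀ g₀, IsPellSolution D f₀ g₀ ∧
      ∀ f g, IsPellSolution D f g → f₀.natDegree ≤ f.natDegree := by
  classical
  have hex : ∃ n f g, IsPellSolution D f g ∧ f.natDegree = n := ⟨_, f, g, h, rfl⟩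
  obtain ⟨f₀, g₀, h₀, hn₀⟩ := Nat.find_spec hex
  exact ⟨f₀, g₀, h₀, fun f g h ↦ hn₀ ▸ Nat.find_min' hex ⟨f, g, h, rfl⟩⟩

variable [NeZero (2 : K)]

theorem sq_eq_sq_of_natDegree_eq (hD0 : 0 < D.natDegree) (h₁ : IsPellSolution D f₁ g₁)
    (hs₁ : g₁.leadingCoeff = f₁.leadingCoeff) (h₂ : IsPellSolution D f₂ g₂)
    (hs₂ : g₂.leadingCoeff = f₂.leadingCoeff) (hn : f₁.natDegree = f₂.natDegree) :
    f₁ ^ 2 = f₂ ^ 2 := by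
  have hn₁ := h₁.natDegree_eq hD0
  have hn₂ := h₂.natDegree_eq hD0
  have hf₁ : f₁ ≠ 0 := ne_zero_of_natDegree_gt (n := 0) (by omega)
  have hf₂ : f₂ ≠ 0 := ne_zero_of_natDegree_gt (n := 0) (by omega)
  have hcross : (f₂ * g₁ - f₁ * g₂) * (f₂ * g₁ + f₁ * g₂) = g₁ ^ 2 - g₂ ^ 2 := by
    linear_combination g₁ ^ 2 * h₂.2 - g₂ ^ 2 * h₁.2
  have hC := natDegree_add_of_leadingCoeff_eq (q := f₁ * g₂) (mul_ne_zero hf₂ h₁.1)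
    (by rw [natDegree_mul hf₂ h₁.1, natDegree_mul hf₁ h₂.1]; omega)
    (by rw [leadingCoeff_mul, leadingCoeff_mul, hs₁, hs₂, mul_comm])
  -- `deg (f₂g₁ + f₁g₂) = deg f + deg g > 2 deg g ≥ deg (g₁² - g₂²)`, so the cross term vanishes.
  suffices hg : g₁ ^ 2 = g₂ ^ 2 by linear_combination h₁.2 - h₂.2 + D * hg
  by_contra hne
  obtain ⟨hG, hC0⟩ := mul_ne_zero_iff.1 (hcross ▸ sub_ne_zero.2 hne)
  have hle := (natDegree_sub_le (g₁ ^ 2) (g₂ ^ 2)).trans_eq' (congrArg natDegree hcross).symm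
  rw [natDegree_mul hG hC0, hC, natDegree_mul hf₂ h₁.1, natDegree_pow, natDegree_pow] at hle
  omega

/-- `F + G√D = (f₁ + g₁√D)(f₂ - g₂√D)`. The normalisation makes the leading terms of `f₁f₂` and
`Dg₁g₂` add up, so `F (f₁f₂ + Dg₁g₂) = f₁² + Dg₂²` determines `deg F` and `lc F`. -/
theorem exists_quotient_of_natDegree_lt (hD : D.Monic) (hD0 : 0 < D.natDegree)
    (h₁ : IsPellSolution D f₁ g₁) (hs₁ : g₁.leadingCoeff = f₁.leadingCoeff) (h₂ : IsPellSolution D f₂ g₂)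
    (hs₂ : g₂.leadingCoeff = f₂.leadingCoeff) (hlt : f₂.natDegree < f₁.natDegree) :
    ∃ F G, IsPellSolution D F G ∧ F.natDegree = f₁.natDegree - f₂.natDegree ∧
      f₁.leadingCoeff = 2 * f₂.leadingCoeff * F.leadingCoeff := by
  have hn₁ := h₁.natDegree_eq hD0
  have hn₂ := h₂.natDegree_eq hD0
  have hf₁ : f₁ ≠ 0 := ne_zero_of_natDegree_gt hlt
  have hf₂ : f₂ ≠ 0 := ne_zero_of_natDegree_gt (n := 0) (by omega)
  set F := f₁ * f₂ - D * g₁ * g₂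
  set G := f₂ * g₁ - f₁ * g₂
  have hpell : F ^ 2 - D * G ^ 2 = 1 := by
    linear_combination (f₂ ^ 2 - D * g₂ ^ 2) * h₁.2 + h₂.2
  have hFA : F * (f₁ * f₂ + D * g₁ * g₂) = f₁ ^ 2 + D * g₂ ^ 2 := by
    linear_combination f₁ ^ 2 * h₂.2 + D * g₂ ^ 2 * h₁.2
  have hAdeg : (f₁ * f₂).natDegree = (D * g₁ * g₂).natDegree := by
    rw [natDegree_mul (mul_ne_zero hD.ne_zero h₁.1) h₂.1, natDegree_mul hD.ne_zero h₁.1,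
      natDegree_mul hf₁ hf₂]
    omega
  have hAlc : (f₁ * f₂).leadingCoeff = (D * g₁ * g₂).leadingCoeff := by
    rw [leadingCoeff_mul, leadingCoeff_mul, leadingCoeff_mul, hD.leadingCoeff, hs₁, hs₂, one_mul]
  have hf₁f₂ := mul_ne_zero hf₁ hf₂
  have hlow : (D * g₂ ^ 2).natDegree < (f₁ ^ 2).natDegree := by
    rw [natDegree_mul hD.ne_zero (pow_ne_zero 2 h₂.1), natDegree_pow, natDegree_pow]; omega
  have hRdeg := natDegree_add_eq_left_of_natDegree_lt hlow
  have hRlc := leadingCoeff_add_of_degree_lt' (degree_lt_degree hlow)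
  rw [natDegree_pow] at hRdeg
  rw [leadingCoeff_pow] at hRlc
  have hR : f₁ ^ 2 + D * g₂ ^ 2 ≠ 0 := fun h0 ↦ by rw [h0, natDegree_zero] at hRdeg; omega
  obtain ⟨hF, hA⟩ := mul_ne_zero_iff.1 (hFA ▸ hR)
  have hFdeg : F.natDegree = f₁.natDegree - f₂.natDegree := by
    have := congrArg natDegree hFA
    rw [natDegree_mul hF hA, natDegree_add_of_leadingCoeff_eq hf₁f₂ hAdeg hAlc, hRdeg,
      natDegree_mul hf₁ hf₂] at this
    omega
  have hG : G ≠ 0 := by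
    rintro hG
    rw [hG] at hpell
    have := congrArg natDegree (show F ^ 2 = 1 by linear_combination hpell)
    rw [natDegree_pow, natDegree_one] at this
    omega
  refine ⟨F, G, ⟨hG, hpell⟩, hFdeg, mul_left_cancel₀ (leadingCoeff_ne_zero.2 hf₁) ?_⟩
  have := congrArg leadingCoeff hFA
  rw [leadingCoeff_mul, leadingCoeff_add_of_leadingCoeff_eq hf₁f₂ hAdeg hAlc, hRlc,
    leadingCoeff_mul] at this
  linear_combination -this

theorem leadingCoeff_sq_eq_of_minimal (hD : D.Monic) (hD0 : 0 < D.natDegree) {f₀ g₀ : K[X]}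
    (h₀ : IsPellSolution D f₀ g₀) (hmin : ∀ f g, IsPellSolution D f g → f₀.natDegree ≤ f.natDegree)
    (h : IsPellSolution D f g) :
    ∃ k : ℕ, f.leadingCoeff ^ 2 = (2 ^ k * f₀.leadingCoeff ^ (k + 1)) ^ 2 := by
  obtain ⟨g₀', h₀', hs₀⟩ := h₀.exists_leadingCoeff_eq hD hD0
  have hpos : 0 < f₀.natDegree := by have := h₀.natDegree_eq hD0; omega
  induction hn : f.natDegree using Nat.strong_induction_on generalizing f g with
  | _ n ih =>
  obtain ⟨g', h', hs'⟩ := h.exists_leadingCoeff_eq hD hD0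
  rcases (hmin f g h).lt_or_eq with hlt | heq
  · obtain ⟨F, G, hFG, hdeg, hlc⟩ := h'.exists_quotient_of_natDegree_lt hD hD0 hs' h₀' hs₀ hlt
    obtain ⟨k, hk⟩ := ih _ (by omega) hFG rfl
    exact ⟨k + 1, by rw [hlc, mul_pow, hk]; ring⟩
  · refine ⟨0, ?_⟩
    have := congrArg leadingCoeff (h'.sq_eq_sq_of_natDegree_eq hD0 hs' h₀' hs₀ heq.symm)
    rw [leadingCoeff_pow, leadingCoeff_pow] at this
    rw [this]; ring

end IsPellSolution

end Pell

theorem Rat.den_eq_one_of_den_two_pow_mul_pow {y : ℚ} {k : ℕ} (h : (2 ^ k * y ^ (k + 1)).den = 1) :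
    y.den = 1 := by
  obtain ⟨z, hz⟩ : ∃ z : ℤ, (z : ℚ) = 2 ^ k * y ^ (k + 1) := ⟨_, (Rat.den_eq_one_iff _).1 h⟩
  have h2y : (2 * y) ^ (k + 1) = ((2 * z : ℤ) : ℚ) := by push_cast; rw [hz]; ring
  have hden := congrArg Rat.den h2y
  rw [Rat.den_pow, Rat.den_intCast, pow_eq_one_iff_left k.succ_ne_zero] at hden
  obtain ⟨u, hu⟩ : ∃ u : ℤ, (u : ℚ) = 2 * y := ⟨_, (Rat.den_eq_one_iff _).1 hden⟩
  have hpow : u ^ (k + 1) = 2 * z := by exact_mod_cast hu ▸ h2y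
  obtain ⟨v, rfl⟩ : (2 : ℤ) ∣ u := Int.Prime.dvd_pow' Nat.prime_two ⟨z, hpow⟩
  have hy : y = v := by push_cast at hu; linarith
  rw [hy, Rat.den_intCast]

theorem Rat.den_eq_of_sq_eq_sq {x y : ℚ} (h : x ^ 2 = y ^ 2) : x.den = y.den := by
  have := congrArg Rat.den h
  rw [Rat.den_pow, Rat.den_pow] at this
  exact Nat.pow_left_injective two_ne_zero this

theorem all_solutions_integral_leading_coeff_general
    (d : Polynomial ℤ) (hmonic : d.Monic) (hdeg : d.natDegree = 4)
    (f g : Polynomial ℚ) (hg : g ≠ 0)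
    (hpell : f ^ 2 - (d.map (Int.castRingHom ℚ)) * g ^ 2 = 1)
    (hf_int : f.leadingCoeff.den = 1) :
    ∀ f' g' : Polynomial ℚ, g' ≠ 0 →
      f' ^ 2 - (d.map (Int.castRingHom ℚ)) * g' ^ 2 = 1 →
      f'.leadingCoeff.den = 1 ∧ g'.leadingCoeff.den = 1 := by
  intro f' g' hg' hpell'
  set D := d.map (Int.castRingHom ℚ)
  have hD : D.Monic := hmonic.map _
  have hD0 : 0 < D.natDegree := by rw [hmonic.natDegree_map, hdeg]; norm_num
  have h : IsPellSolution D f g := ⟨hg, hpell⟩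
  have h' : IsPellSolution D f' g' := ⟨hg', hpell'⟩
  obtain ⟨f₀, g₀, h₀, hmin⟩ := h.exists_forall_natDegree_le
  obtain ⟨m, hm⟩ := h₀.leadingCoeff_sq_eq_of_minimal hD hD0 hmin h
  obtain ⟨k, hk⟩ := h₀.leadingCoeff_sq_eq_of_minimal hD hD0 hmin h'
  obtain ⟨a₀, ha₀⟩ : ∃ a₀ : ℤ, (a₀ : ℚ) = f₀.leadingCoeff :=
    ⟨_, (Rat.den_eq_one_iff _).1 <| Rat.den_eq_one_of_den_two_pow_mul_pow <|
      (Rat.den_eq_of_sq_eq_sq hm).symm.trans hf_int⟩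
  have hf'_int : f'.leadingCoeff.den = 1 := by
    rw [Rat.den_eq_of_sq_eq_sq hk, ← ha₀]
    exact_mod_cast Rat.den_intCast (2 ^ k * a₀ ^ (k + 1))
  exact ⟨hf'_int, (Rat.den_eq_of_sq_eq_sq (h'.leadingCoeff_sq hD hD0)).symm.trans hf'_int⟩

theorem all_solutions_integral_leading_coeff
    (d : Polynomial ℤ) (hmonic : d.Monic) (hdeg : d.natDegree = 4) (hsf : Squarefree d)
    (f g : Polynomial ℚ) (hg : g ≠ 0)
    (hpell : f ^ 2 - (d.map (Int.castRingHom ℚ)) * g ^ 2 = 1)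
    (hf_int : f.leadingCoeff.den = 1) (hg_int : g.leadingCoeff.den = 1) :
    ∀ f' g' : Polynomial ℚ, g' ≠ 0 →
      f' ^ 2 - (d.map (Int.castRingHom ℚ)) * g' ^ 2 = 1 →
      f'.leadingCoeff.den = 1 ∧ g'.leadingCoeff.den = 1 :=
  all_solutions_integral_leading_coeff_general d hmonic hdeg f g hg hpell hf_int
end

section
/- Let p, q ∈ ℤ[X] be nonzero polynomials with deg p > deg q and q(0) = 0. Let a ∈ ℚ, written in lowest terms as a = r/s with r ∈ ℤ, s ∈ ℕ, gcd(r, s) = 1. Suppose q(a) ≠ 0 and p(a)/q(a) ∈ ℤ, i.e. there exists k ∈ ℤ with p(a) = k·q(a) in ℚ. Then s divides the leading coefficient of p and r divides the constant coefficient p(0). -/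
open Polynomial

/-
Subtracting `k q` from `p` produces a polynomial `p - k q` with root `a` and, because `deg q < deg p`
and `q(0) = 0`, the same leading and constant coefficients as `p`. The rational root theorem applied
to `p - k q` then gives the two divisibilities.
-/

theorem Rat.associated_isFractionRing_num_den (a : ℚ) :
    Associated (IsFractionRing.num ℤ a) a.num ∧
      Associated (IsFractionRing.den ℤ a : ℤ) (a.den : ℤ) := by
  have hden : (a.den : ℤ) ∈ nonZeroDivisors ℤ :=
    mem_nonZeroDivisors_of_ne_zero (by exact_mod_cast a.den_nz)
  refine IsFractionRing.num_den_unique ℤ a a.num ⟨a.den, hden⟩ ?_ ?_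
  · exact a.isCoprime_num_den.isRelPrime
  · rw [IsFractionRing.mk'_eq_div, algebraMap_int_eq, eq_intCast, eq_intCast]
    exact a.num_div_den

theorem Rat.num_dvd_coeff_zero_of_aeval_eq_zero {p : ℤ[X]} {a : ℚ} (h : aeval a p = 0) :
    a.num ∣ p.coeff 0 :=
  (Rat.associated_isFractionRing_num_den a).1.symm.dvd.trans (num_dvd_of_is_root h)

theorem Rat.den_dvd_leadingCoeff_of_aeval_eq_zero {p : ℤ[X]} {a : ℚ} (h : aeval a p = 0) :
    (a.den : ℤ) ∣ p.leadingCoeff :=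
  (Rat.associated_isFractionRing_num_den a).2.symm.dvd.trans (den_dvd_of_is_root h)

theorem Polynomial.leadingCoeff_sub_C_mul_of_degree_lt {R : Type*} [Ring R] {p q : R[X]}
    (h : q.degree < p.degree) (k : R) : (p - C k * q).leadingCoeff = p.leadingCoeff :=
  leadingCoeff_sub_of_degree_lt ((C_mul' k q ▸ degree_smul_le k q).trans_lt h)

theorem Polynomial.coeff_zero_sub_C_mul_of_coeff_zero_eq_zero {R : Type*} [Ring R] {p q : R[X]}
    (h : q.coeff 0 = 0) (k : R) : (p - C k * q).coeff 0 = p.coeff 0 := by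
  rw [coeff_sub, coeff_C_mul, h, mul_zero, sub_zero]

theorem rational_value_divisibility_general
    (p q : Polynomial ℤ)
    (hdeg : q.degree < p.degree) (hq0 : q.eval 0 = 0)
    (a : ℚ)
    (hint : ∃ k : ℤ, aeval a p = (k : ℚ) * aeval a q) :
    (a.den : ℤ) ∣ p.leadingCoeff ∧ a.num ∣ p.coeff 0 := by
  obtain ⟨k, hk⟩ := hint
  have hroot : aeval a (p - C k * q) = 0 := by
    rw [map_sub, map_mul, aeval_C, hk, algebraMap_int_eq, eq_intCast, sub_self]
  constructor
  · rw [← leadingCoeff_sub_C_mul_of_degree_lt hdeg k]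
    exact Rat.den_dvd_leadingCoeff_of_aeval_eq_zero hroot
  · have hq0' : q.coeff 0 = 0 := by rwa [coeff_zero_eq_eval_zero]
    rw [← coeff_zero_sub_C_mul_of_coeff_zero_eq_zero hq0' k]
    exact Rat.num_dvd_coeff_zero_of_aeval_eq_zero hroot

theorem rational_value_divisibility
    (p q : Polynomial ℤ) (hp : p ≠ 0) (hq : q ≠ 0)
    (hdeg : q.degree < p.degree) (hq0 : q.eval 0 = 0)
    (a : ℚ) (hqa : aeval a q ≠ 0)
    (hint : ∃ k : ℤ, aeval a p = (k : ℚ) * aeval a q) :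
    (a.den : ℤ) ∣ p.leadingCoeff ∧ a.num ∣ p.coeff 0 :=
  rational_value_divisibility_general p q hdeg hq0 a hint
end

section
/- Let q ∈ ℚ and n ≥ 1 a natural number. If 2^{n−1}·qⁿ is an integer, then q is an integer. -/
/-! Write `q = a / b` in lowest terms. Integrality of `2^(n-1) q^n` means `b^n ∣ 2^(n-1) a^n`, and
since `b` is coprime to `a` this gives `b^n ∣ 2^(n-1)`. So `b = 2^j` with `j n ≤ n - 1`, forcing `j = 0`. -/

theorem Rat.den_dvd_of_den_natCast_mul_eq_one {r : ℚ} {c : ℕ} (h : ((c : ℚ) * r).den = 1) :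
    r.den ∣ c := by
  have hgcd := Rat.den_mul_den_eq_den_mul_gcd (c : ℚ) r
  simp only [Rat.den_natCast, Rat.num_natCast, h, one_mul] at hgcd
  have hdvd : r.den ∣ c * r.num.natAbs := by
    rw [hgcd, ← Int.natAbs_natCast c, ← Int.natAbs_mul]
    exact Nat.gcd_dvd_left _ _
  exact r.reduced.symm.dvd_of_dvd_mul_right hdvd

theorem Nat.eq_one_of_pow_dvd_prime_pow {p b m n : ℕ} (hp : p.Prime) (hmn : m < n)
    (h : b ^ n ∣ p ^ m) : b = 1 := by
  obtain ⟨j, -, rfl⟩ := (Nat.dvd_prime_pow hp).1 ((dvd_pow_self b (by omega)).trans h)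
  rw [← pow_mul, Nat.pow_dvd_pow_iff_le_right hp.one_lt] at h
  obtain rfl : j = 0 := by
    by_contra hj
    have : n ≤ j * n := Nat.le_mul_of_pos_left n (Nat.pos_of_ne_zero hj)
    omega
  exact pow_zero p

theorem integral_power_implies_integral (q : ℚ) (n : ℕ) (hn : 1 ≤ n)
    (h : ((2 : ℚ) ^ (n - 1) * q ^ n).den = 1) : q.den = 1 := by
  have hden : (q ^ n).den ∣ 2 ^ (n - 1) :=
    Rat.den_dvd_of_den_natCast_mul_eq_one (by exact_mod_cast h)
  rw [Rat.den_pow] at hden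
  exact Nat.eq_one_of_pow_dvd_prime_pow Nat.prime_two (by omega) hden
end

section
/- For s ∈ ℤ, the polynomial X² + s is Pellian over ℤ[X] (i.e., there exist f, g ∈ ℤ[X] with g ≠ 0 and f² − (X² + s)·g² = 1) if and only if s ∈ {1, −1, 2, −2}. -/
/-!
Differentiating `f² - D g² = 1` with `D = X² + s` and using that `g` and `f` are coprime gives
`f' = c g` for a constant `c`, and then `c f = X g + D g'`. Eliminating `f` yields the
Chebyshev-type equation `c² g = g + 3 X g' + D g''`, i.e. the coefficient recurrence
`(c² - (k+1)²) g_k = s (k+1)(k+2) g_{k+2}`. Hence, with `m = deg g`, `c² = (m+1)²`, only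
coefficients of the parity of `m` survive, and `4^j g_{m-2j} = s^j C(m-j, j) g_m`.
Looking at constant terms: for even `m`, `g_1 = 0` forces `f(0) = 0`, so `-s g(0)² = 1` and
`s = -1`; for odd `m`, `f(0)² = 1` and `c f(0) = s g_1` give `s^(m+1) g_m² = 4^m`,
so `|s|` divides 2.
-/

open Polynomial

theorem Nat.succ_mul_succ_mul_choose_succ_succ (j k : ℕ) :
    (k + 1) * (k + 2) * (k + j + 2).choose (k + 2) =
      (j + 1) * (k + j + 2) * (k + j + 1).choose k := by
  have h₁ := Nat.add_one_mul_choose_eq (k + j + 1) (k + 1)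
  have h₂ := Nat.choose_succ_right_eq (k + j + 1) k
  rw [show k + j + 1 - k = j + 1 by omega] at h₂
  calc (k + 1) * (k + 2) * (k + j + 2).choose (k + 2)
      = (k + 1) * ((k + j + 2) * (k + j + 1).choose (k + 1)) := by rw [h₁]; ring
    _ = (k + j + 2) * ((k + j + 1).choose (k + 1) * (k + 1)) := by ring
    _ = (j + 1) * (k + j + 2) * (k + j + 1).choose k := by rw [h₂]; ring

theorem Polynomial.coeff_X_mul_derivative {R : Type*} [CommRing R] (p : R[X]) (k : ℕ) :
    (X * derivative p).coeff k = k * p.coeff k := by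
  cases k with
  | zero => simp
  | succ k => rw [coeff_X_mul, coeff_derivative]; push_cast; ring

section Pell

variable {R : Type*} [CommRing R] [IsDomain R] {s : R} {f g : R[X]}

theorem natDegree_le_of_pell (h : f ^ 2 - (X ^ 2 + C s) * g ^ 2 = 1) :
    f.natDegree ≤ g.natDegree + 1 := by
  have hdeg : 2 * f.natDegree ≤ 2 * g.natDegree + 2 := by
    calc 2 * f.natDegree = (1 + (X ^ 2 + C s) * g ^ 2).natDegree := by
          rw [← natDegree_pow, ← h]; ring_nf
      _ ≤ max (natDegree (1 : R[X])) ((X ^ 2 + C s) * g ^ 2).natDegree := natDegree_add_le _ _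
      _ ≤ 2 * g.natDegree + 2 := by
          rw [natDegree_one]
          refine max_le (Nat.zero_le _) (natDegree_mul_le.trans ?_)
          rw [natDegree_X_pow_add_C]
          have := natDegree_pow_le (p := g) (n := 2)
          omega
  omega

theorem mul_derivative_of_pell [CharZero R] (h : f ^ 2 - (X ^ 2 + C s) * g ^ 2 = 1) :
    f * derivative f = g * (X * g + (X ^ 2 + C s) * derivative g) := by
  have h' := congrArg derivative h
  simp only [derivative_sub, derivative_mul, derivative_pow, derivative_add, derivative_X,
    derivative_C, derivative_one, Nat.cast_ofNat, map_ofNat] at h'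
  refine mul_left_cancel₀ (two_ne_zero (α := R[X])) ?_
  linear_combination h'

theorem exists_derivative_eq_C_mul_of_pell [CharZero R] (hg : g ≠ 0)
    (h : f ^ 2 - (X ^ 2 + C s) * g ^ 2 = 1) : ∃ c, derivative f = C c * g := by
  have hcop : IsCoprime g f := ⟨-((X ^ 2 + C s) * g), f, by linear_combination h⟩
  obtain ⟨q, hq⟩ := hcop.dvd_of_dvd_mul_left (Dvd.intro _ (mul_derivative_of_pell h).symm)
  refine ⟨q.coeff 0, ?_⟩
  rcases eq_or_ne q 0 with rfl | hq0
  · simpa using hq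
  have hdeg : (g * q).natDegree ≤ g.natDegree := by
    have := natDegree_derivative_le f
    rw [hq] at this
    have := natDegree_le_of_pell h
    omega
  rw [natDegree_mul hg hq0] at hdeg
  rw [hq, eq_C_of_natDegree_le_zero (by omega : q.natDegree ≤ 0), mul_comm, coeff_C_zero]

theorem exists_coeff_recurrence_of_pell [CharZero R] (hg : g ≠ 0)
    (h : f ^ 2 - (X ^ 2 + C s) * g ^ 2 = 1) :
    ∃ c : R,
      (∀ k : ℕ, (c ^ 2 - (k + 1) ^ 2) * g.coeff k = s * (k + 1) * (k + 2) * g.coeff (k + 2)) ∧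
        c * f.coeff 0 = s * g.coeff 1 := by
  obtain ⟨c, hc⟩ := exists_derivative_eq_C_mul_of_pell hg h
  have first : C c * f = X * (X * derivative g + g) + C s * derivative g := by
    refine mul_left_cancel₀ hg ?_
    linear_combination mul_derivative_of_pell h - f * hc
  have second : C (c ^ 2) * g = X * derivative (X * derivative g + g) + (X * derivative g + g) +
      C s * derivative (derivative g) := by
    have h' := congrArg derivative first
    simp only [derivative_mul, derivative_add, derivative_C, derivative_X, hc] at h'
    rw [derivative_add, derivative_mul, derivative_X, C_pow]
    linear_combination h'
  refine ⟨c, fun k => ?_, ?_⟩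
  · have hk := congrArg (coeff · k) second
    simp only [coeff_add, coeff_C_mul, coeff_X_mul_derivative, coeff_derivative] at hk
    push_cast at hk
    linear_combination hk
  · have h0 := congrArg (coeff · 0) first
    simp only [coeff_add, coeff_C_mul, coeff_X_mul_zero, coeff_derivative] at h0
    linear_combination h0

end Pell

section CoeffRecurrence

variable {R : Type*} [CommRing R] [IsDomain R] {g : R[X]} {s c : R}

theorem sq_eq_of_coeff_recurrence (hg : g ≠ 0)
    (hrec : ∀ k : ℕ,
      (c ^ 2 - (k + 1) ^ 2) * g.coeff k = s * (k + 1) * (k + 2) * g.coeff (k + 2)) :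
    c ^ 2 = (g.natDegree + 1) ^ 2 := by
  have htop := hrec g.natDegree
  rw [coeff_eq_zero_of_natDegree_lt (by omega : g.natDegree < g.natDegree + 2), mul_zero] at htop
  exact sub_eq_zero.1 ((mul_eq_zero.1 htop).resolve_right (leadingCoeff_ne_zero.2 hg))

variable [CharZero R]

theorem coeff_eq_zero_of_coeff_recurrence
    (hrec : ∀ k : ℕ,
      (c ^ 2 - (k + 1) ^ 2) * g.coeff k = s * (k + 1) * (k + 2) * g.coeff (k + 2))
    (hc : c ^ 2 = (g.natDegree + 1) ^ 2) {k t : ℕ} (hk : k + 2 * t = g.natDegree + 1) :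
    g.coeff k = 0 := by
  induction t generalizing k with
  | zero => exact coeff_eq_zero_of_natDegree_lt (by omega)
  | succ t ih =>
    have hrec_k := hrec k
    rw [ih (by omega : k + 2 + 2 * t = _), mul_zero] at hrec_k
    have hfactor : c ^ 2 - (k + 1) ^ 2 = (((2 * t + 1) * (2 * k + 2 * t + 3) : ℕ) : R) := by
      rw [hc, show g.natDegree = k + 2 * t + 1 by omega]; push_cast; ring
    rw [hfactor] at hrec_k
    exact (mul_eq_zero.1 hrec_k).resolve_left (Nat.cast_ne_zero.2 (by positivity))

theorem four_pow_mul_coeff_of_coeff_recurrence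
    (hrec : ∀ k : ℕ,
      (c ^ 2 - (k + 1) ^ 2) * g.coeff k = s * (k + 1) * (k + 2) * g.coeff (k + 2))
    (hc : c ^ 2 = (g.natDegree + 1) ^ 2) {j k : ℕ} (hk : k + 2 * j = g.natDegree) :
    4 ^ j * g.coeff k = s ^ j * (k + j).choose k * g.coeff g.natDegree := by
  induction j generalizing k with
  | zero => simp [← hk]
  | succ j ih =>
    have ih' := ih (k := k + 2) (by omega)
    rw [show k + 2 + j = k + j + 2 by omega] at ih'
    have hrec_k := hrec k
    have hfactor : c ^ 2 - (k + 1) ^ 2 = 4 * (((j + 1) * (k + j + 2) : ℕ) : R) := by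
      rw [hc, ← hk]; push_cast; ring
    rw [hfactor] at hrec_k
    have hbinom := congrArg (Nat.cast : ℕ → R) (Nat.succ_mul_succ_mul_choose_succ_succ j k)
    refine mul_left_cancel₀
      (Nat.cast_ne_zero.2 (by positivity) : (((j + 1) * (k + j + 2) : ℕ) : R) ≠ 0) ?_
    rw [show k + (j + 1) = k + j + 1 by omega]
    push_cast at hrec_k hbinom ⊢
    linear_combination 4 ^ j * hrec_k + s * (k + 1) * (k + 2) * ih' +
      s ^ (j + 1) * g.coeff g.natDegree * hbinom

end CoeffRecurrence

theorem Nat.dvd_two_of_pow_succ_dvd_four_pow {n k : ℕ} (h : n ^ (k + 1) ∣ 4 ^ k) : n ∣ 2 := by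
  rw [show (4 : ℕ) ^ k = 2 ^ (2 * k) by rw [pow_mul]; norm_num] at h
  obtain ⟨a, -, rfl⟩ :=
    (Nat.dvd_prime_pow Nat.prime_two).1 ((dvd_pow_self n k.succ_ne_zero).trans h)
  rw [← pow_mul, Nat.pow_dvd_pow_iff_le_right one_lt_two] at h
  exact pow_dvd_pow 2 (by nlinarith : a ≤ 1)

theorem eq_of_pell_X_sq_add_C {s : ℤ} {f g : ℤ[X]} (hg : g ≠ 0)
    (h : f ^ 2 - (X ^ 2 + C s) * g ^ 2 = 1) : s = 1 ∨ s = -1 ∨ s = 2 ∨ s = -2 := by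
  obtain ⟨c, hrec, hcf⟩ := exists_coeff_recurrence_of_pell hg h
  have hc := sq_eq_of_coeff_recurrence hg hrec
  have hconst : f.coeff 0 ^ 2 - s * g.coeff 0 ^ 2 = 1 := by
    simpa [coeff_zero_eq_eval_zero] using congrArg (eval 0) h
  obtain ⟨t, ht | ht⟩ := Nat.even_or_odd' g.natDegree
  · have hc0 : c ^ 2 ≠ 0 := by rw [hc]; positivity
    have hf0 : f.coeff 0 = 0 := by
      rw [coeff_eq_zero_of_coeff_recurrence hrec hc (k := 1) (t := t) (by omega), mul_zero] at hcf
      exact (mul_eq_zero.1 hcf).resolve_left (ne_zero_pow two_ne_zero hc0)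
    have hunit := Int.eq_one_or_neg_one_of_mul_eq_neg_one' (u := g.coeff 0 ^ 2) (v := s)
      (by rw [hf0] at hconst; linear_combination -hconst)
    rcases hunit with ⟨-, hs⟩ | ⟨hsq, -⟩
    · exact Or.inr (Or.inl hs)
    · nlinarith [sq_nonneg (g.coeff 0)]
  · have hg0 : g.coeff 0 = 0 :=
      coeff_eq_zero_of_coeff_recurrence hrec hc (k := 0) (t := t + 1) (by omega)
    have hf0 : f.coeff 0 ^ 2 = 1 := by rw [hg0] at hconst; linear_combination hconst
    have hclosed := four_pow_mul_coeff_of_coeff_recurrence hrec hc (j := t) (k := 1) (by omega)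
    rw [Nat.choose_one_right] at hclosed
    rw [ht] at hc
    push_cast at hc hclosed
    have key : s ^ (2 * t + 1 + 1) * g.coeff g.natDegree ^ 2 = 4 ^ (2 * t + 1) := by
      refine mul_right_cancel₀ (by positivity : ((t : ℤ) + 1) ^ 2 ≠ 0) ?_
      calc s ^ (2 * t + 1 + 1) * g.coeff g.natDegree ^ 2 * (t + 1) ^ 2
          = s ^ 2 * (s ^ t * (1 + t) * g.coeff g.natDegree) ^ 2 := by ring
        _ = s ^ 2 * (4 ^ t * g.coeff 1) ^ 2 := by rw [← hclosed]
        _ = (4 ^ t) ^ 2 * (c * f.coeff 0) ^ 2 := by rw [hcf]; ring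
        _ = (4 ^ t) ^ 2 * c ^ 2 := by rw [mul_pow, hf0, mul_one]
        _ = 4 ^ (2 * t + 1) * (t + 1) ^ 2 := by rw [hc]; ring
    have hs : s.natAbs ∣ 2 := Nat.dvd_two_of_pow_succ_dvd_four_pow
      (by simpa [Int.natAbs_pow] using Int.natAbs_dvd_natAbs.2 (Dvd.intro _ key))
    rcases (Nat.dvd_prime Nat.prime_two).1 hs with hs | hs <;> omega

theorem x_sq_add_s_pellian_iff (s : ℤ) :
    (∃ f g : Polynomial ℤ, g ≠ 0 ∧ f ^ 2 - (X ^ 2 + C s) * g ^ 2 = 1) ↔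
    (s = 1 ∨ s = -1 ∨ s = 2 ∨ s = -2) := by
  refine ⟨fun ⟨f, g, hg, h⟩ => eq_of_pell_X_sq_add_C hg h, ?_⟩
  -- the fundamental solutions: `X + √D` for `s = -1`, otherwise `±((2X² + s) + 2X √D) / s`
  rintro (rfl | rfl | rfl | rfl)
  · exact ⟨2 * X ^ 2 + 1, 2 * X, mul_ne_zero two_ne_zero X_ne_zero, by rw [map_one]; ring⟩
  · exact ⟨X, 1, one_ne_zero, by rw [map_neg, map_one]; ring⟩
  · exact ⟨X ^ 2 + 1, X, X_ne_zero, by rw [map_ofNat]; ring⟩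
  · exact ⟨X ^ 2 - 1, X, X_ne_zero, by rw [map_neg, map_ofNat]; ring⟩
end

section
/- For s ∈ ℤ, the polynomial X² + X + s is Pellian over ℤ[X] (i.e., there exist f, g ∈ ℤ[X] with g ≠ 0 and f² − (X² + X + s)·g² = 1) if and only if s = 0. -/
/-!
With `U = 2X + 1` and `Δ = 1 - 4s` we have `4(X² + X + s) = U² - Δ`, so a solution `(f, g)` gives
`a² - 2U·a·b + Δ·b² = 4` for `a = U·g - 2f`, `b = g`. The step `(a, b) ↦ (2U·a - Δ·b, a)` multiplies
this form by `Δ`, and since `(2U·a - Δ·b)·b = a² - (value)` it lowers the degree once `deg a < deg b`,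
which holds for `a` or for its conjugate `2U·b - a`. Modulo a prime `p ∣ Δ` the step multiplies `a`
by `2U`, so `a ≢ 0` persists; initially it holds because the form is `≡ a·(a - 2U·b) ≢ 0`. For
`s ≠ 0`, `Δ` is an odd non-unit, so such a `p` exists and the degrees cannot drop forever.
-/

open Polynomial

namespace Polynomial

variable {R S : Type*} [CommRing R]

/-- The norm of `a - b t` where `t² = w t - δ`. -/
noncomputable def normForm (w : R[X]) (δ : R) (a b : R[X]) : R[X] :=
  a ^ 2 - w * a * b + C δ * b ^ 2

variable (w : R[X]) (δ : R) (a b : R[X])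

theorem normForm_descend :
    normForm w δ (w * a - C δ * b) a = C δ * normForm w δ a b := by
  unfold normForm; ring

theorem normForm_conj : normForm w δ (w * b - a) b = normForm w δ a b := by
  unfold normForm; ring

theorem mul_conj_eq_normForm : a * (w * b - a) = C δ * b ^ 2 - normForm w δ a b := by
  unfold normForm; ring

theorem descend_mul_eq_normForm : (w * a - C δ * b) * b = a ^ 2 - normForm w δ a b := by
  unfold normForm; ring

variable {w δ a b}

theorem map_ne_zero_of_map_normForm_ne_zero [CommRing S] {φ : R →+* S} (hδ : φ δ = 0)
    (h : (normForm w δ a b).map φ ≠ 0) : a.map φ ≠ 0 := by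
  contrapose! h
  simp [normForm, Polynomial.map_sub, Polynomial.map_add, Polynomial.map_mul,
    Polynomial.map_pow, h, hδ]

variable [IsDomain R]

theorem natDegree_lt_or_natDegree_conj_lt {c : R} (hw : 0 < w.natDegree) (hb : b ≠ 0)
    (ha : a ≠ 0) (ha' : w * b - a ≠ 0) (h : normForm w δ a b = C c) :
    a.natDegree < b.natDegree ∨ (w * b - a).natDegree < b.natDegree := by
  have hprod : a.natDegree + (w * b - a).natDegree ≤ 2 * b.natDegree := by
    rw [← natDegree_mul ha ha', mul_conj_eq_normForm, h, natDegree_sub_C, ← natDegree_pow]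
    exact natDegree_C_mul_le _ _
  have hsum : w.natDegree + b.natDegree ≤ max a.natDegree (w * b - a).natDegree := by
    have hw0 : w ≠ 0 := by rintro rfl; simp at hw
    calc w.natDegree + b.natDegree = (a + (w * b - a)).natDegree := by
          rw [add_sub_cancel, natDegree_mul hw0 hb]
      _ ≤ _ := natDegree_add_le _ _
  omega

variable [CommRing S] [IsDomain S] {φ : R →+* S}

theorem normForm_ne_C_of_natDegree_lt (hδ : φ δ = 0) (hw : w.map φ ≠ 0) {c : R}
    (ha : a.map φ ≠ 0) (hab : a.natDegree < b.natDegree) : normForm w δ a b ≠ C c := by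
  induction hn : b.natDegree using Nat.strong_induction_on generalizing a b c with
  | _ n ih =>
  intro h
  set a' := w * a - C δ * b
  have ha' : a'.map φ ≠ 0 := by
    have : a'.map φ = w.map φ * a.map φ := by simp [a', Polynomial.map_sub, hδ]
    rw [this]
    exact mul_ne_zero hw ha
  have hdeg : a'.natDegree < a.natDegree := by
    have hb : b ≠ 0 := by rintro rfl; simp at hab
    have : a'.natDegree + b.natDegree ≤ 2 * a.natDegree := by
      rw [← natDegree_mul (fun h0 ↦ ha' (by rw [h0, Polynomial.map_zero])) hb,
        descend_mul_eq_normForm, h, natDegree_sub_C, natDegree_pow]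
    omega
  exact ih _ (hn ▸ hab) ha' hdeg rfl (by rw [normForm_descend, h, C_mul])

theorem normForm_ne_C (hδ : φ δ = 0) (hw : w.map φ ≠ 0) (hw_deg : 0 < w.natDegree)
    (hb : b ≠ 0) {c : R} (hc : φ c ≠ 0) : normForm w δ a b ≠ C c := by
  intro h
  have hmap : ∀ a', normForm w δ a' b = C c → a'.map φ ≠ 0 := fun a' h' ↦
    map_ne_zero_of_map_normForm_ne_zero hδ (by rwa [h', map_C, Ne, C_eq_zero])
  have ha := hmap a h
  have ha' := hmap _ ((normForm_conj w δ a b).trans h)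
  have ne_zero_of_map {q : R[X]} (hq : q.map φ ≠ 0) : q ≠ 0 := by rintro rfl; simp at hq
  rcases natDegree_lt_or_natDegree_conj_lt hw_deg hb (ne_zero_of_map ha) (ne_zero_of_map ha') h
    with hlt | hlt
  · exact normForm_ne_C_of_natDegree_lt hδ hw ha hlt h
  · exact normForm_ne_C_of_natDegree_lt hδ hw ha' hlt ((normForm_conj w δ a b).trans h)

end Polynomial

theorem Int.exists_isMaximal_one_sub_four_mul_mem {s : ℤ} (hs : s ≠ 0) :
    ∃ M : Ideal ℤ, M.IsMaximal ∧ 1 - 4 * s ∈ M ∧ (2 : ℤ) ∉ M := by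
  have hunit : ¬IsUnit (1 - 4 * s) := by
    rw [Int.isUnit_iff]; omega
  obtain ⟨M, hM, hmem⟩ := exists_max_ideal_of_mem_nonunits hunit
  refine ⟨M, hM, hmem, fun h2 ↦ hM.ne_top ((M.eq_top_iff_one).2 ?_)⟩
  have := M.add_mem hmem (M.mul_mem_left (2 * s) h2)
  rwa [show 1 - 4 * s + 2 * s * 2 = 1 by ring] at this

theorem x_sq_add_x_add_s_pellian_iff (s : ℤ) :
    (∃ f g : Polynomial ℤ, g ≠ 0 ∧ f ^ 2 - (X ^ 2 + X + C s) * g ^ 2 = 1) ↔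
    s = 0 := by
  constructor
  · rintro ⟨f, g, hg, h⟩
    by_contra hs
    obtain ⟨M, hM, hΔ, h2⟩ := Int.exists_isMaximal_one_sub_four_mul_mem hs
    have := hM.isPrime
    set φ := Ideal.Quotient.mk M
    have hφΔ : φ (1 - 4 * s) = 0 := Ideal.Quotient.eq_zero_iff_mem.2 hΔ
    have hφ2 : φ 2 ≠ 0 := by rwa [Ne, Ideal.Quotient.eq_zero_iff_mem]
    have hw : (C 4 * X + C 2 : ℤ[X]).map φ ≠ 0 := fun h0 ↦ hφ2 (by
      simpa using congrArg (coeff · 0) h0)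
    have hw_deg : 0 < (C 4 * X + C 2 : ℤ[X]).natDegree := by
      rw [natDegree_linear (by norm_num)]; norm_num
    have hφ4 : φ 4 ≠ 0 := by
      rw [show (4 : ℤ) = 2 * 2 by norm_num, map_mul]
      exact mul_ne_zero hφ2 hφ2
    refine normForm_ne_C (a := (2 * X + 1) * g - 2 * f) hφΔ hw hw_deg hg hφ4 ?_
    calc _ = C 4 * (f ^ 2 - (X ^ 2 + X + C s) * g ^ 2) := by
          unfold normForm; simp only [map_sub, map_mul, map_one, map_ofNat]; ring
      _ = C 4 := by rw [h, mul_one]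
  · rintro rfl
    exact ⟨2 * X + 1, 2, two_ne_zero, by rw [C_0]; ring⟩
end

section
/- Let a ∈ ℤ with a ≠ 0. Then the polynomial (X − a)²·(X² − 1) is not Pellian over ℤ[X]: there do not exist f, g ∈ ℤ[X] with g ≠ 0 and f² − (X − a)²(X² − 1)·g² = 1. -/
/-!
Multiplication by `X ± √(X² - 1)` acts on solutions of `f² - (X² - 1) h² = 1`, and multiplying by
`X - √(X² - 1)` (after fixing the sign of `h`) lowers the degree of `f`. Descending to `h = 0`
shows that over a domain with `2 ≠ 0` every solution is `±(Tₙ, Uₙ₋₁)` with Chebyshev polynomials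
`T`, `U`, where `n ∈ ℤ`. A solution `(f, g)` for `(X - a)² (X² - 1)` thus gives `(X - a) g = Uₘ`
for some `m ≠ -1` (as `U₋ₘ₋₂ = -Uₘ`), vanishing at `a`. But `Uₘ(a) ≠ 0` for `|a| ≥ 1`: up to
sign it reduces to `m ≥ 0` and `a ≥ 1`, where `Uₘ(a) ≥ m + 1`.
-/

open Polynomial

namespace Polynomial

section Pell

variable {R : Type*} [CommRing R]

def IsChebyshevPair (f h : R[X]) : Prop :=
  ∃ n : ℤ, (f = Chebyshev.T R n ∧ h = Chebyshev.U R (n - 1)) ∨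
    (f = -Chebyshev.T R n ∧ h = -Chebyshev.U R (n - 1))

theorem IsChebyshevPair.of_neg_right {f h : R[X]} (hp : IsChebyshevPair f (-h)) :
    IsChebyshevPair f h := by
  obtain ⟨n, ⟨hf, hh⟩ | ⟨hf, hh⟩⟩ := hp
  · refine ⟨-n, .inl ⟨by rw [hf, Chebyshev.T_neg], ?_⟩⟩
    rw [Chebyshev.U_neg_sub_one, ← hh, neg_neg]
  · refine ⟨-n, .inr ⟨by rw [hf, Chebyshev.T_neg], ?_⟩⟩
    rw [Chebyshev.U_neg_sub_one, neg_neg]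
    exact neg_inj.mp hh

theorem IsChebyshevPair.of_descent {f h : R[X]}
    (hp : IsChebyshevPair (X * f - (X ^ 2 - 1) * h) (X * h - f)) : IsChebyshevPair f h := by
  have hT (n : ℤ) :
      Chebyshev.T R (n + 1) = X * Chebyshev.T R n + (X ^ 2 - 1) * Chebyshev.U R (n - 1) := by
    have := Chebyshev.T_eq_X_mul_T_sub_pol_U R (n - 1)
    rw [sub_add_cancel, show n - 1 + 2 = n + 1 by ring] at this
    linear_combination this
  have hU (n : ℤ) : Chebyshev.U R n = X * Chebyshev.U R (n - 1) + Chebyshev.T R n := by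
    simpa using Chebyshev.U_eq_X_mul_U_add_T R (n - 1)
  obtain ⟨n, ⟨hf, hh⟩ | ⟨hf, hh⟩⟩ := hp
  · refine ⟨n + 1, .inl ⟨?_, ?_⟩⟩
    · rw [hT]; linear_combination X * hf + (X ^ 2 - 1) * hh
    · rw [add_sub_cancel_right, hU]; linear_combination hf + X * hh
  · refine ⟨n + 1, .inr ⟨?_, ?_⟩⟩
    · rw [hT]; linear_combination X * hf + (X ^ 2 - 1) * hh
    · rw [add_sub_cancel_right, hU]; linear_combination hf + X * hh

theorem IsChebyshevPair.exists_eq_U {f h : R[X]} (hp : IsChebyshevPair f h) :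
    ∃ m : ℤ, h = Chebyshev.U R m := by
  obtain ⟨n, ⟨-, hh⟩ | ⟨-, hh⟩⟩ := hp
  · exact ⟨n - 1, hh⟩
  · exact ⟨-n - 1, by rw [hh, Chebyshev.U_neg_sub_one]⟩

theorem pell_descent {f h : R[X]} (hfh : f ^ 2 - (X ^ 2 - 1) * h ^ 2 = 1) :
    (X * f - (X ^ 2 - 1) * h) ^ 2 - (X ^ 2 - 1) * (X * h - f) ^ 2 = 1 := by
  linear_combination hfh

variable [IsDomain R] {f h : R[X]}

theorem natDegree_eq_and_leadingCoeff_sq_of_pell (hfh : f ^ 2 - (X ^ 2 - 1) * h ^ 2 = 1)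
    (hh : h ≠ 0) :
    f.natDegree = h.natDegree + 1 ∧ f.leadingCoeff ^ 2 = h.leadingCoeff ^ 2 := by
  have hmonic : (X ^ 2 - 1 : R[X]).Monic := by
    simpa using monic_X_pow_sub_C (1 : R) two_ne_zero
  have hdeg : (X ^ 2 - 1 : R[X]).natDegree = 2 := by
    simpa using natDegree_X_pow_sub_C (n := 2) (r := (1 : R))
  have hq : ((X ^ 2 - 1) * h ^ 2).natDegree = 2 + 2 * h.natDegree := by
    rw [natDegree_mul hmonic.ne_zero (pow_ne_zero 2 hh), natDegree_pow, hdeg]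
  have hf : f ^ 2 = (X ^ 2 - 1) * h ^ 2 + 1 := by linear_combination hfh
  have hlt : (1 : R[X]).natDegree < ((X ^ 2 - 1) * h ^ 2).natDegree := by
    rw [natDegree_one, hq]; omega
  constructor
  · have := congrArg natDegree hf
    rw [natDegree_add_eq_left_of_natDegree_lt hlt, natDegree_pow, hq] at this
    omega
  · have := congrArg leadingCoeff hf
    rwa [leadingCoeff_add_of_degree_lt' (degree_lt_degree hlt), leadingCoeff_pow,
      leadingCoeff_mul, hmonic.leadingCoeff, one_mul, leadingCoeff_pow] at this

variable [NeZero (2 : R)]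

/-- The degree drops because `(X h - f) (X h + f) = h² - 1`, where `X h + f` has leading
coefficient `2 · lc h`. -/
theorem natDegree_X_mul_sub_lt_of_pell (hfh : f ^ 2 - (X ^ 2 - 1) * h ^ 2 = 1)
    (hh : h ≠ 0) (hlc : f.leadingCoeff = h.leadingCoeff) (hne : X * h - f ≠ 0) :
    (X * h - f).natDegree < h.natDegree := by
  have hdeg := (natDegree_eq_and_leadingCoeff_sq_of_pell hfh hh).1
  have hsum : (X * h).leadingCoeff + f.leadingCoeff ≠ 0 := by
    rw [leadingCoeff_mul, leadingCoeff_X, one_mul, hlc, ← two_mul]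
    exact mul_ne_zero two_ne_zero (leadingCoeff_ne_zero.mpr hh)
  have hXhf : (X * h + f).natDegree = h.natDegree + 1 := by
    have hf : f ≠ 0 := by rintro rfl; simp at hdeg
    have hXh : (X * h).degree = f.degree := by
      rw [degree_eq_natDegree (mul_ne_zero X_ne_zero hh), degree_eq_natDegree hf,
        natDegree_X_mul hh, hdeg]
    rw [← hdeg]
    exact natDegree_eq_of_degree_eq
      (by rw [degree_add_eq_of_leadingCoeff_add_ne_zero hsum, hXh, max_self])
  have hprod : (X * h - f) * (X * h + f) = h ^ 2 - 1 := by linear_combination -hfh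
  have hle : (h ^ 2 - 1).natDegree ≤ 2 * h.natDegree := by
    refine (natDegree_sub_le _ _).trans ?_
    rw [natDegree_pow, natDegree_one]; omega
  have hXhf0 : X * h + f ≠ 0 := fun h0 => by simp [h0] at hXhf
  rw [← hprod, natDegree_mul hne hXhf0, hXhf] at hle
  omega

theorem natDegree_pell_descent_lt (hfh : f ^ 2 - (X ^ 2 - 1) * h ^ 2 = 1)
    (hh : h ≠ 0) (hlc : f.leadingCoeff = h.leadingCoeff) :
    (X * f - (X ^ 2 - 1) * h).natDegree < f.natDegree := by
  have hdeg := (natDegree_eq_and_leadingCoeff_sq_of_pell hfh hh).1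
  by_cases hne : X * h - f = 0
  · have hsq : (X * f - (X ^ 2 - 1) * h) ^ 2 = 1 := by
      linear_combination pell_descent hfh + (X ^ 2 - 1) * (X * h - f) * hne
    have := congrArg natDegree hsq
    rw [natDegree_pow, natDegree_one] at this
    omega
  · rw [(natDegree_eq_and_leadingCoeff_sq_of_pell (pell_descent hfh) hne).1, hdeg]
    exact Nat.succ_lt_succ (natDegree_X_mul_sub_lt_of_pell hfh hh hlc hne)

theorem isChebyshevPair_of_pell (hfh : f ^ 2 - (X ^ 2 - 1) * h ^ 2 = 1) :
    IsChebyshevPair f h := by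
  induction hd : f.natDegree using Nat.strong_induction_on generalizing f h with
  | _ d ih =>
  by_cases hh : h = 0
  · subst hh
    obtain hf | hf : f = 1 ∨ f = -1 := by simpa using hfh
    · exact ⟨0, .inl ⟨by simp [hf], by simp⟩⟩
    · exact ⟨0, .inr ⟨by simp [hf], by simp⟩⟩
  have of_leadingCoeff_eq {h : R[X]} (hfh : f ^ 2 - (X ^ 2 - 1) * h ^ 2 = 1) (hh : h ≠ 0)
      (hlc : f.leadingCoeff = h.leadingCoeff) : IsChebyshevPair f h :=
    .of_descent (ih _ (hd ▸ natDegree_pell_descent_lt hfh hh hlc) (pell_descent hfh) rfl)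
  obtain hlc | hlc :=
    sq_eq_sq_iff_eq_or_eq_neg.mp (natDegree_eq_and_leadingCoeff_sq_of_pell hfh hh).2
  · exact of_leadingCoeff_eq hfh hh hlc
  · exact .of_neg_right (of_leadingCoeff_eq (by linear_combination hfh) (neg_ne_zero.mpr hh)
      (by rw [leadingCoeff_neg, hlc]))

end Pell

namespace Chebyshev

variable {R : Type*} [CommRing R] [LinearOrder R] [IsStrictOrderedRing R] {x : R}

theorem natCast_add_one_le_U_eval (hx : 1 ≤ x) (n : ℕ) : (n + 1 : R) ≤ (U R n).eval x := by
  have hgrowth (n : ℕ) :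
      (n + 1 : R) ≤ (U R n).eval x ∧ (U R n).eval x + 1 ≤ (U R (n + 1)).eval x := by
    induction n with
    | zero => simp; linarith
    | succ n ih =>
      obtain ⟨hge, hinc⟩ := ih
      have hrec : (U R (n + 2)).eval x = 2 * x * (U R (n + 1)).eval x - (U R n).eval x := by
        simp [U_add_two]
      push_cast
      refine ⟨by linarith, ?_⟩
      rw [add_assoc, one_add_one_eq_two, hrec]
      nlinarith
  exact (hgrowth n).1

theorem U_eval_pos (hx : 1 ≤ x) (n : ℕ) : 0 < (U R n).eval x :=
  lt_of_lt_of_le (by positivity) (natCast_add_one_le_U_eval hx n)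

theorem U_eval_ne_zero (hx : 1 ≤ |x|) {n : ℤ} (hn : n ≠ -1) : (U R n).eval x ≠ 0 := by
  suffices h : ∀ m : ℕ, (U R m).eval x ≠ 0 by
    rcases le_or_gt 0 n with hn0 | hn0
    · lift n to ℕ using hn0
      exact h n
    · obtain ⟨k, rfl⟩ : ∃ k : ℕ, n = -k - 2 := ⟨(-n - 2).toNat, by omega⟩
      rw [U_neg_sub_two, eval_neg, neg_ne_zero]
      exact h k
  intro m
  rcases le_or_gt 0 x with hx0 | hx0
  · exact (U_eval_pos (by rwa [abs_of_nonneg hx0] at hx) m).ne'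
  · rw [← neg_neg x, U_eval_neg]
    refine mul_ne_zero ?_ (U_eval_pos (by rwa [abs_of_neg hx0] at hx) m).ne'
    rcases Int.units_eq_one_or (m : ℤ).negOnePow with h | h <;> simp [h]

end Chebyshev

end Polynomial

theorem shifted_square_times_x_sq_sub_one_not_pellian (a : ℤ) (ha : a ≠ 0) :
    ¬ ∃ f g : Polynomial ℤ, g ≠ 0 ∧
      f ^ 2 - ((X - C a) ^ 2 * (X ^ 2 - 1)) * g ^ 2 = 1 := by
  rintro ⟨f, g, hg, hfg⟩
  obtain ⟨m, hm⟩ := (isChebyshevPair_of_pell (f := f) (h := (X - C a) * g)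
    (by linear_combination hfg)).exists_eq_U
  have hm1 : m ≠ -1 := by
    rintro rfl
    exact mul_ne_zero (X_sub_C_ne_zero a) hg (hm.trans (Chebyshev.U_neg_one ℤ))
  apply Chebyshev.U_eval_ne_zero (Int.one_le_abs ha) hm1
  simp [← hm]
end

section
/- For every a ∈ ℤ, the polynomial (X − a)²·(X² + X) is not Pellian over ℤ[X]: there do not exist f, g ∈ ℤ[X] with g ≠ 0 and f² − (X − a)²(X² + X)·g² = 1. -/
/-!
Put `h = (X - a) g` and `D = X² + X`. Then `f + h√D` is a unit of norm one in `ℤ[X][√D]`, and every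
such unit is `±εⁿ` with `ε = 2X + 1 + 2√D`, `n ∈ ℤ`: the `√D`-coordinates of `uε` and `uε⁻¹` add up to
`2(2X + 1)h` and multiply to `h² - 4`, so one of them has smaller degree than `h`, and descent ends
at `h = 0`, i.e. at `u = ±1`. The `√D`-coordinates of `εⁿ` evaluated at `X = a` satisfy
`yₙ₊₂ = 2(2a + 1)yₙ₊₁ - yₙ`, `y₀ = 0`, `y₁ = 2`; since `|2a + 1| ≥ 1` their absolute values strictly
increase, so `h(a) = 0` forces `n = 0`, i.e. `h = 0`.
-/

open Polynomial QuadraticAlgebra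

theorem Polynomial.degree_lt_or_degree_lt_of_natDegree_mul_le {R : Type*} [Semiring R]
    [NoZeroDivisors R] {p q : R[X]} {k : ℕ} (hadd : k < (p + q).natDegree)
    (hmul : (p * q).natDegree ≤ 2 * k) : p.degree < k ∨ q.degree < k := by
  by_contra! h
  have hp : p ≠ 0 := by rintro rfl; simp at h
  have hq : q ≠ 0 := by rintro rfl; simp at h
  rw [natDegree_mul hp hq] at hmul
  have := natDegree_add_le p q
  have := le_natDegree_of_coe_le_degree h.1
  have := le_natDegree_of_coe_le_degree h.2
  omega

theorem strictMono_abs_of_recurrence {R : Type*} [CommRing R] [LinearOrder R]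
    [IsStrictOrderedRing R] {c : R} {y : ℕ → R} (hc : 2 ≤ |c|)
    (hy : ∀ n, y (n + 2) = c * y (n + 1) - y n) (h01 : |y 0| < |y 1|) :
    StrictMono fun n ↦ |y n| := by
  refine strictMono_nat_of_lt_succ fun n ↦ ?_
  induction n with
  | zero => exact h01
  | succ n ih =>
    have hrev : |c * y (n + 1)| - |y n| ≤ |y (n + 2)| := by
      rw [hy]; exact abs_sub_abs_le_abs_sub _ _
    have hgrow : 2 * |y (n + 1)| ≤ |c * y (n + 1)| := by
      rw [abs_mul]; exact mul_le_mul_of_nonneg_right hc (abs_nonneg _)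
    show |y (n + 1)| < |y (n + 2)|
    linarith

theorem QuadraticAlgebra.eq_one_or_eq_neg_one_of_im_eq_zero_s14 {R : Type*} [CommRing R]
    [NoZeroDivisors R] {a b : R} (u : unitary (QuadraticAlgebra R a b))
    (h : (u : QuadraticAlgebra R a b).im = 0) : u = 1 ∨ u = -1 := by
  have hre : (u : QuadraticAlgebra R a b).re * (u : QuadraticAlgebra R a b).re = 1 := by
    simpa [norm_def, h] using norm_eq_one u.2
  rcases mul_self_eq_one_iff.mp hre with hre | hre
  · exact .inl (Subtype.ext (QuadraticAlgebra.ext hre h))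
  · exact .inr (Subtype.ext (QuadraticAlgebra.ext (by simpa [Unitary.coe_neg] using hre)
      (by simp [Unitary.coe_neg, h])))

local notation "𝒪" => QuadraticAlgebra ℤ[X] (X ^ 2 + X) 0

noncomputable def pellUnit : unitary 𝒪 :=
  ⟨⟨2 * X + 1, 2⟩, mem_unitary (by rw [norm_def]; ring)⟩

theorem coe_pellUnit : (pellUnit : 𝒪) = ⟨2 * X + 1, 2⟩ := rfl

theorem degree_im_mul_star_pellUnit_lt_or_degree_im_mul_pellUnit_lt {z : 𝒪} (hz : z.norm = 1)
    (him : z.im ≠ 0) :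
    (z * star (pellUnit : 𝒪)).im.degree < z.im.degree ∨
      (z * (pellUnit : 𝒪)).im.degree < z.im.degree := by
  have hadd : (z * star (pellUnit : 𝒪)).im + (z * pellUnit).im = (C 4 * X + C 2) * z.im := by
    simp only [coe_pellUnit, star_mk, im_mul, zero_mul, add_zero, mul_neg, neg_zero, map_ofNat]
    ring
  have hmul : (z * star (pellUnit : 𝒪)).im * (z * pellUnit).im = z.im ^ 2 - C 4 := by
    rw [norm_def] at hz
    simp only [coe_pellUnit, star_mk, im_mul, zero_mul, add_zero, mul_neg, neg_zero,
      eq_intCast, Int.cast_ofNat]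
    linear_combination (-4) * hz
  have hlin : (C 4 * X + C 2 : ℤ[X]).natDegree = 1 := natDegree_linear (by norm_num)
  rw [degree_eq_natDegree him]
  apply degree_lt_or_degree_lt_of_natDegree_mul_le
  · rw [hadd, natDegree_mul (ne_zero_of_natDegree_gt (hlin ▸ Nat.zero_lt_one)) him, hlin]
    omega
  · rw [hmul, natDegree_sub_C, natDegree_pow]

theorem exists_eq_pellUnit_zpow (u : unitary 𝒪) :
    ∃ n : ℤ, u = pellUnit ^ n ∨ u = -pellUnit ^ n := by
  induction hd : (u : 𝒪).im.degree using WellFoundedLT.induction generalizing u with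
  | ind d ih =>
  subst hd
  by_cases him : (u : 𝒪).im = 0
  · exact ⟨0, by simpa using eq_one_or_eq_neg_one_of_im_eq_zero_s14 u him⟩
  rcases degree_im_mul_star_pellUnit_lt_or_degree_im_mul_pellUnit_lt (norm_eq_one u.2) him
    with hlt | hlt
  · obtain ⟨m, hm⟩ := ih _ hlt (u * pellUnit⁻¹) (by rw [← Unitary.star_eq_inv]; rfl)
    refine ⟨m + 1, ?_⟩
    rw [zpow_add_one, ← inv_mul_cancel_right u pellUnit]
    rcases hm with hm | hm <;> rw [hm]
    exacts [.inl rfl, .inr (neg_mul _ _)]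
  · obtain ⟨m, hm⟩ := ih _ hlt (u * pellUnit) rfl
    refine ⟨m - 1, ?_⟩
    rw [zpow_sub_one, ← mul_inv_cancel_right u pellUnit]
    rcases hm with hm | hm <;> rw [hm]
    exacts [.inl rfl, .inr (neg_mul _ _)]

theorem im_pellUnit_pow_add_two (n : ℕ) :
    ((pellUnit : 𝒪) ^ (n + 2)).im =
      2 * (2 * X + 1) * ((pellUnit : 𝒪) ^ (n + 1)).im - ((pellUnit : 𝒪) ^ n).im := by
  simp only [pow_succ, im_mul, re_mul, coe_pellUnit]
  ring

theorem eval_im_pellUnit_pow_ne_zero (a : ℤ) {n : ℕ} (hn : n ≠ 0) :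
    ((pellUnit : 𝒪) ^ n).im.eval a ≠ 0 := by
  have hodd : 1 ≤ |2 * a + 1| := Int.one_le_abs (by omega)
  have hmono : StrictMono fun k : ℕ ↦ |((pellUnit : 𝒪) ^ k).im.eval a| :=
    strictMono_abs_of_recurrence (c := 2 * (2 * a + 1))
      (by rw [abs_mul, abs_two]; linarith)
      (fun k ↦ by simp [im_pellUnit_pow_add_two])
      (by simp [coe_pellUnit])
  simpa using hmono (Nat.pos_of_ne_zero hn)

theorem eval_im_pellUnit_zpow_ne_zero (a : ℤ) {n : ℤ} (hn : n ≠ 0) :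
    ((pellUnit ^ n : unitary 𝒪) : 𝒪).im.eval a ≠ 0 := by
  rcases Int.natAbs_eq n with h | h <;> rw [h]
  · rw [zpow_natCast, SubmonoidClass.coe_pow]
    exact eval_im_pellUnit_pow_ne_zero a (by omega)
  · rw [zpow_neg, zpow_natCast, ← Unitary.star_eq_inv, Unitary.coe_star, SubmonoidClass.coe_pow,
      im_star, eval_neg, neg_ne_zero]
    exact eval_im_pellUnit_pow_ne_zero a (by omega)

theorem shifted_square_times_x_sq_add_x_not_pellian (a : ℤ) :
    ¬ ∃ f g : Polynomial ℤ, g ≠ 0 ∧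
      f ^ 2 - ((X - C a) ^ 2 * (X ^ 2 + X)) * g ^ 2 = 1 := by
  rintro ⟨f, g, hg, hfg⟩
  let u : unitary 𝒪 :=
    ⟨⟨f, (X - C a) * g⟩, mem_unitary (by rw [norm_def]; linear_combination hfg)⟩
  have him : (u : 𝒪).im ≠ 0 := mul_ne_zero (X_sub_C_ne_zero a) hg
  have hroot : (u : 𝒪).im.eval a = 0 := by simp [u]
  obtain ⟨n, hn⟩ := exists_eq_pellUnit_zpow u
  obtain rfl : n = 0 := by
    by_contra hn0
    refine eval_im_pellUnit_zpow_ne_zero a hn0 ?_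
    rcases hn with hn | hn <;> simpa [hn, Unitary.coe_neg] using hroot
  exact him (by rcases hn with hn | hn <;> simp [hn, Unitary.coe_neg])
end

section
/- Each of the polynomials X²(X² + 1), X²(X² − 1), X²(X² + 2), X²(X² − 2), and X²(X² − 2X − 1) in ℤ[X] is Pellian over ℤ[X], i.e., for each such d there exist f, g ∈ ℤ[X] with g ≠ 0 and f² − d·g² = 1. -/
/-!
The first four quartics are `A² + c` with `c ∣ 2A`, and then `f = A k + 1`, `g = k` (where
`c k = 2A`) solve the Pell equation. For the last one, `D = X² - 2X - 1 = (X - 1)² - 2` has such a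
solution `(f, g)` with `f(0) = 0`, so the square `(f² + D g², 2 f g)` of `f + g √D` has its
`g`-part divisible by `X`, which absorbs the factor `X²` of `d`.
-/

open Polynomial

section Pell

variable {R : Type*} [CommRing R]

def IsPellian (d : R) : Prop :=
  ∃ f g : R, g ≠ 0 ∧ f ^ 2 - d * g ^ 2 = 1

theorem sq_sub_mul_sq_eq_one_of_eq_sq_add {d A c k : R} (hd : d = A ^ 2 + c)
    (hck : c * k = 2 * A) : (A * k + 1) ^ 2 - d * k ^ 2 = 1 := by
  linear_combination (-k) * hck + (-k ^ 2) * hd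

theorem isPellian_of_eq_sq_add {d A c k : R} (hd : d = A ^ 2 + c) (hck : c * k = 2 * A)
    (hk : k ≠ 0) : IsPellian d :=
  ⟨A * k + 1, k, hk, sq_sub_mul_sq_eq_one_of_eq_sq_add hd hck⟩

theorem isPellian_sq_mul_of_two_mul_eq {D f g e g' : R} (h : f ^ 2 - D * g ^ 2 = 1)
    (he : 2 * f * g = e * g') (hg' : g' ≠ 0) : IsPellian (e ^ 2 * D) :=
  ⟨f ^ 2 + D * g ^ 2, g', hg', by
    linear_combination (f ^ 2 - D * g ^ 2 + 1) * h + D * (2 * f * g + e * g') * he⟩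

end Pell

theorem five_nonsquarefree_quartics_pellian :
    (∃ f g : Polynomial ℤ, g ≠ 0 ∧ f ^ 2 - (X ^ 2 * (X ^ 2 + 1)) * g ^ 2 = 1) ∧
    (∃ f g : Polynomial ℤ, g ≠ 0 ∧ f ^ 2 - (X ^ 2 * (X ^ 2 - 1)) * g ^ 2 = 1) ∧
    (∃ f g : Polynomial ℤ, g ≠ 0 ∧ f ^ 2 - (X ^ 2 * (X ^ 2 + 2)) * g ^ 2 = 1) ∧
    (∃ f g : Polynomial ℤ, g ≠ 0 ∧ f ^ 2 - (X ^ 2 * (X ^ 2 - 2)) * g ^ 2 = 1) ∧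
    (∃ f g : Polynomial ℤ, g ≠ 0 ∧ f ^ 2 - (X ^ 2 * (X ^ 2 - 2 * X - 1)) * g ^ 2 = 1) := by
  refine ⟨?_, ?_, ?_, ?_, ?_⟩
  · exact isPellian_of_eq_sq_add (A := X ^ 2) (c := X ^ 2) (k := 2) (by ring) (by ring)
      two_ne_zero
  · exact isPellian_of_eq_sq_add (A := X ^ 2) (c := -X ^ 2) (k := -2) (by ring) (by ring)
      (neg_ne_zero.mpr two_ne_zero)
  · exact isPellian_of_eq_sq_add (A := X ^ 2) (c := 2 * X ^ 2) (k := 1) (by ring) (by ring)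
      one_ne_zero
  · exact isPellian_of_eq_sq_add (A := X ^ 2) (c := -2 * X ^ 2) (k := -1) (by ring) (by ring)
      (neg_ne_zero.mpr one_ne_zero)
  · have hD := sq_sub_mul_sq_eq_one_of_eq_sq_add (d := (X ^ 2 - 2 * X - 1 : ℤ[X]))
      (A := X - 1) (c := -2) (k := -(X - 1)) (by ring) (by ring)
    have hg : (2 * (X - 1) * (X - 2) : ℤ[X]) ≠ 0 := fun h => by simpa using congrArg (eval 0) h
    exact isPellian_sq_mul_of_two_mul_eq hD (e := X) (by ring) hg
end

section
/- Let a, b ∈ ℚ with a ≠ 0 and b ≠ 0. Let d(X) = X⁴ + ((8a − 2)/b²)·X² + (32a/b³)·X + ((16a² + 24a + 1)/b⁴) ∈ ℚ[X], and define f(X) = (256a⁴ + 224a² + 32a + 1)/(512a³) + ((64a³b − 48a²b − 20ab − b)/(128a³))·X + ((64a³b² − 48a²b² + 4ab² + b²)/(128a³))·X² + ((16a²b³ + 24ab³ + b³)/(128a³))·X³ + ((48a²b⁴ − 32ab⁴ − 5b⁴)/(256a³))·X⁴ + ((−4ab⁵ + b⁵)/(128a³))·X⁵ + ((4ab⁶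 + b⁶)/(128a³))·X⁶ + (−b⁷/(128a³))·X⁷ + (b⁸/(512a³))·X⁸ and g(X) = (64a³b² − 48a²b² − 20ab² − b²)/(512a³) + ((12ab³ + b³)/(128a³))·X + ((48a²b⁴ − 24ab⁴ − 5b⁴)/(512a³))·X² + (−b⁵/(32a²))·X³ + ((12ab⁶ + 5b⁶)/(512a³))·X⁴ + (−b⁷/(128a³))·X⁵ + (b⁸/(512a³))·X⁶. Then f(X)² − d(X)·g(X)² = 1 in ℚ[X]. -/
/-!
With `u = b X` one has `b⁴ d = D(u)`, where `D(u) = u⁴ + (8a - 2)u² + 32a u + 16a² + 24a + 1`, and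
`D Q² - P² = 1024 a³` for `P = u⁴ - 2u³ + 8a u² + (8a + 2)u + 16a² - 16a - 1` and
`Q = u² - 2u + 4a + 1`. Squaring `P + b²Q √d`, whose norm is the constant `-1024 a³`, and dividing
by that constant gives the unit `f + g √d`: `f - 1 = P² / 512a³` and `g = b² P Q / 512a³`.
-/

open Polynomial

section CommRing

variable {R : Type*} [CommRing R]

theorem sq_sub_mul_sq_eq_one_of_mul_sq_sub_sq_eq {d p q c k : R}
    (hpq : d * q ^ 2 - p ^ 2 = c) (hk : k * c = 2) :
    (1 + k * p ^ 2) ^ 2 - d * (k * p * q) ^ 2 = 1 := by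
  linear_combination (-(k ^ 2 * p ^ 2)) * hpq + (-(k * p ^ 2)) * hk

def torsionFourQuartic (a u : R) : R :=
  u ^ 4 + (8 * a - 2) * u ^ 2 + 32 * a * u + (16 * a ^ 2 + 24 * a + 1)

def torsionFourP (a u : R) : R :=
  u ^ 4 - 2 * u ^ 3 + 8 * a * u ^ 2 + (8 * a + 2) * u + (16 * a ^ 2 - 16 * a - 1)

def torsionFourQ (a u : R) : R :=
  u ^ 2 - 2 * u + (4 * a + 1)

theorem torsionFourQuartic_mul_sq_sub_sq (a u : R) :
    torsionFourQuartic a u * torsionFourQ a u ^ 2 - torsionFourP a u ^ 2 = 1024 * a ^ 3 := by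
  unfold torsionFourQuartic torsionFourP torsionFourQ
  ring

end CommRing

theorem Polynomial.sq_sub_mul_sq_eq_one_of_mul_sq_sub_sq_eq_C {K : Type*} [Field K]
    {d p q : K[X]} {c : K} (hc : c ≠ 0) (hpq : d * q ^ 2 - p ^ 2 = C c) :
    (1 + C (2 / c) * p ^ 2) ^ 2 - d * (C (2 / c) * p * q) ^ 2 = 1 :=
  sq_sub_mul_sq_eq_one_of_mul_sq_sub_sq_eq hpq (by rw [← C_mul, div_mul_cancel₀ _ hc, map_ofNat])

theorem explicit_pell_solution_torsion_order_four_family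
    (a b : ℚ) (ha : a ≠ 0) (hb : b ≠ 0)
    (d f g : Polynomial ℚ)
    (hd : d = X ^ 4 + C ((8 * a - 2) / b ^ 2) * X ^ 2 + C (32 * a / b ^ 3) * X
        + C ((16 * a ^ 2 + 24 * a + 1) / b ^ 4))
    (hf : f = C ((256 * a ^ 4 + 224 * a ^ 2 + 32 * a + 1) / (512 * a ^ 3))
        + C ((64 * a ^ 3 * b - 48 * a ^ 2 * b - 20 * a * b - b) / (128 * a ^ 3)) * X
        + C ((64 * a ^ 3 * b ^ 2 - 48 * a ^ 2 * b ^ 2 + 4 * a * b ^ 2 + b ^ 2) / (128 * a ^ 3)) * X ^ 2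
        + C ((16 * a ^ 2 * b ^ 3 + 24 * a * b ^ 3 + b ^ 3) / (128 * a ^ 3)) * X ^ 3
        + C ((48 * a ^ 2 * b ^ 4 - 32 * a * b ^ 4 - 5 * b ^ 4) / (256 * a ^ 3)) * X ^ 4
        + C ((-4 * a * b ^ 5 + b ^ 5) / (128 * a ^ 3)) * X ^ 5
        + C ((4 * a * b ^ 6 + b ^ 6) / (128 * a ^ 3)) * X ^ 6
        + C (-b ^ 7 / (128 * a ^ 3)) * X ^ 7
        + C (b ^ 8 / (512 * a ^ 3)) * X ^ 8)
    (hg : g = C ((64 * a ^ 3 * b ^ 2 - 48 * a ^ 2 * b ^ 2 - 20 * a * b ^ 2 - b ^ 2) / (512 * a ^ 3))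
        + C ((12 * a * b ^ 3 + b ^ 3) / (128 * a ^ 3)) * X
        + C ((48 * a ^ 2 * b ^ 4 - 24 * a * b ^ 4 - 5 * b ^ 4) / (512 * a ^ 3)) * X ^ 2
        + C (-b ^ 5 / (32 * a ^ 2)) * X ^ 3
        + C ((12 * a * b ^ 6 + 5 * b ^ 6) / (512 * a ^ 3)) * X ^ 4
        + C (-b ^ 7 / (128 * a ^ 3)) * X ^ 5
        + C (b ^ 8 / (512 * a ^ 3)) * X ^ 6) :
    f ^ 2 - d * g ^ 2 = 1 := by
  set p := torsionFourP (C a) (C b * X)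
  set q := C (b ^ 2) * torsionFourQ (C a) (C b * X)
  set k := C (2 / (1024 * a ^ 3))
  have hd_scaled : d * C (b ^ 2) ^ 2 = torsionFourQuartic (C a) (C b * X) := by
    subst hd
    refine Polynomial.funext fun x => ?_
    simp only [torsionFourQuartic, eval_add, eval_sub, eval_mul, eval_pow, eval_C, eval_X,
      eval_one, eval_ofNat]
    field_simp
  have hpq : d * q ^ 2 - p ^ 2 = C (1024 * a ^ 3) := by
    rw [map_mul, map_pow, map_ofNat, ← torsionFourQuartic_mul_sq_sub_sq, ← hd_scaled]
    ring
  have hf_eq : f = 1 + k * p ^ 2 := by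
    subst hf
    refine Polynomial.funext fun x => ?_
    simp only [p, k, torsionFourP, eval_add, eval_sub, eval_mul, eval_pow, eval_C, eval_X,
      eval_one, eval_ofNat]
    field_simp
    ring
  have hg_eq : g = k * p * q := by
    subst hg
    refine Polynomial.funext fun x => ?_
    simp only [p, q, k, torsionFourP, torsionFourQ, eval_add, eval_sub, eval_mul, eval_pow,
      eval_C, eval_X, eval_one, eval_ofNat]
    field_simp
    ring
  rw [hf_eq, hg_eq]
  exact sq_sub_mul_sq_eq_one_of_mul_sq_sub_sq_eq_C (by positivity) hpq
end
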